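/- arXiv:2406.12717 — 12 statements merged into one kernel-verified Lean document; each statement's English description precedes it below -/
import Mathlib

section
/- Let κ ≥ 1 be an integer and define μ : {1, …, 2κ²} → {1, …, κ} by μ(i) = 1 + ⌊(i−1)/(2κ)⌋ if i is odd, and μ(i) = 1 + ((i−2) mod 2κ)/2 if i is even. Then for every ordered pair (j, j') ∈ {1, …, κ} × {1, …, κ} with j ≠ j', there exists an index i ∈ {1, …, 2κ² − 1} such that μ(i) = j and μ(i+1) = j'. -/
/-- For `κ ≥ 1`, the mapping `μ` on `{1, …, 2κ²}` given by
`μ(i) = 1 + ⌊(i−1)/(2κ)⌋` for odd `i` and `μ(i) = 1 + ((i−2) mod 2κ)/2` for even `i`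
hits every ordered pair `(j, j')` with `j ≠ j'` on some pair of consecutive indices. -/
theorem stmt_0 (κ : ℕ) (hκ : 1 ≤ κ) (μ : ℕ → ℕ)
    (hμ_odd : ∀ i, Odd i → μ i = 1 + (i - 1) / (2 * κ))
    (hμ_even : ∀ i, Even i → μ i = 1 + ((i - 2) % (2 * κ)) / 2) :
    ∀ j j' : ℕ, 1 ≤ j → j ≤ κ → 1 ≤ j' → j' ≤ κ → j ≠ j' →
      ∃ i : ℕ, 1 ≤ i ∧ i ≤ 2 * κ ^ 2 - 1 ∧ μ i = j ∧ μ (i + 1) = j' := by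
  intro j j' hj1 hjκ hj'1 hj'κ _
  refine ⟨2 * κ * (j - 1) + 2 * (j' - 1) + 1, by omega, ?_, ?_, ?_⟩
  · obtain ⟨a, rfl⟩ : ∃ a, j = a + 1 := ⟨j - 1, by omega⟩
    obtain ⟨b, rfl⟩ : ∃ b, j' = b + 1 := ⟨j' - 1, by omega⟩
    simp only [Nat.add_sub_cancel]
    have h : κ * (a + 1) ≤ κ * κ := Nat.mul_le_mul_left κ (by omega)
    have hκ2 : κ ^ 2 = κ * κ := sq κ
    refine Nat.le_sub_of_add_le ?_
    nlinarith
  · rw [hμ_odd _ ⟨κ * (j - 1) + (j' - 1), by ring⟩]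
    have h1 : 2 * κ * (j - 1) + 2 * (j' - 1) + 1 - 1
        = 2 * (j' - 1) + (j - 1) * (2 * κ) := by ring_nf; omega
    rw [h1, Nat.add_mul_div_right _ _ (by omega : 0 < 2 * κ),
      Nat.div_eq_of_lt (by omega)]
    omega
  · rw [hμ_even _ ⟨κ * (j - 1) + (j' - 1) + 1, by ring⟩]
    have h1 : 2 * κ * (j - 1) + 2 * (j' - 1) + 1 + 1 - 2
        = 2 * (j' - 1) + (j - 1) * (2 * κ) := by ring_nf; omega
    rw [h1, Nat.add_mul_mod_self_right, Nat.mod_eq_of_lt (by omega)]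
    omega
end

section
/- Let G be a finite simple graph, let P and Q be st-shortest paths of length k, and let S be the set of positions at which the vertex sequences of P and Q differ. If there exists a TJ-reconfiguration sequence from P to Q of length at most ℓ, then there exists a TJ-reconfiguration sequence from P to Q of length at most ℓ in which every position that is ever modified (i.e., every position at which two consecutive paths of the sequence differ) is within index-distance ℓ of some position in S. -/
open SimpleGraph

/-- `W` is a shortest path from `s` to `t` in `G`: a path whose length (number of edges)
equals `dist_G(s,t)`. -/
def IsShortestSTPath {V : Type*} (G : SimpleGraph V) {s t : V} (W : G.Walk s t) : Prop :=
  W.IsPath ∧ W.length = G.dist s t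

/-- Two `st`-paths of the same length are TJ-adjacent if their vertex sequences differ
at exactly one position. -/
def TJAdjacent {V : Type*} (G : SimpleGraph V) {s t : V} (P Q : G.Walk s t) : Prop :=
  P.length = Q.length ∧ ∃! i : ℕ, P.getVert i ≠ Q.getVert i

/-- A TJ-reconfiguration sequence from `P` to `Q` of length `ℓ`: a sequence
`P = P_0, P_1, …, P_ℓ = Q` of `st`-shortest paths in which consecutive paths are
TJ-adjacent. -/
def TJSeq {V : Type*} (G : SimpleGraph V) {s t : V} (P Q : G.Walk s t) (ℓ : ℕ) : Prop :=
  ∃ f : ℕ → G.Walk s t, f 0 = P ∧ f ℓ = Q ∧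
    (∀ i ≤ ℓ, IsShortestSTPath G (f i)) ∧ ∀ i < ℓ, TJAdjacent G (f i) (f (i + 1))

/-!
Let `M` be the set of positions modified along a given reconfiguration sequence of length
`n ≤ ℓ`, so `|M| ≤ n`. Call a position kept if it is joined to a position where `P` and `Q`
differ by a run of consecutive positions of `M`. Replace every path of the sequence by the
vertex sequence that agrees with it at kept positions and with `P` elsewhere. The neighbours
of a maximal run of kept positions are never modified, so these are again walks, and having
length `dist(s,t)` they are shortest paths. They run from `P` to `Q`, consecutive ones differ
in at most one (kept) position, and a kept position lies within `|M| ≤ ℓ` of a position where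
`P` and `Q` differ. Deleting repetitions yields the required sequence.
-/

namespace SimpleGraph.Walk

variable {V : Type*} {G : SimpleGraph V}

def ofFn : (g : ℕ → V) → (n : ℕ) → (∀ i < n, G.Adj (g i) (g (i + 1))) → G.Walk (g 0) (g n)
  | _, 0, _ => nil
  | g, n + 1, h =>
    cons (h 0 n.succ_pos)
      (ofFn (fun i => g (i + 1)) n fun i hi => h (i + 1) (Nat.succ_lt_succ hi))

theorem length_ofFn : ∀ (g : ℕ → V) (n : ℕ) (h : ∀ i < n, G.Adj (g i) (g (i + 1))),
    (ofFn g n h).length = n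
  | _, 0, _ => rfl
  | g, n + 1, h => by simp [ofFn, length_ofFn _ n]

theorem getVert_ofFn : ∀ (g : ℕ → V) (n : ℕ) (h : ∀ i < n, G.Adj (g i) (g (i + 1))) (i : ℕ),
    (ofFn g n h).getVert i = g (min i n)
  | _, 0, _, _ => by simp [ofFn]
  | _, _ + 1, _, 0 => rfl
  | g, n + 1, h, i + 1 => by
    simp only [ofFn, getVert_cons_succ, getVert_ofFn _ n, Nat.succ_min_succ]

theorem exists_getVert_eq_ite {s t : V} (A C : G.Walk s t) (hlen : A.length = C.length)
    (X : Set ℕ) [DecidablePred (· ∈ X)]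
    (hX : ∀ p ∈ X, ∀ q ∉ X, (q = p + 1 ∨ p = q + 1) → A.getVert q = C.getVert q) :
    ∃ W : G.Walk s t, W.length = A.length ∧
      ∀ p, W.getVert p = if p ∈ X then A.getVert p else C.getVert p := by
  set g : ℕ → V := fun p => if p ∈ X then A.getVert p else C.getVert p
  have hg : ∀ p, A.length ≤ p → g p = t := fun p hp => by
    by_cases hpX : p ∈ X <;>
      simp [g, hpX, getVert_of_length_le, hp, ← hlen]
  have hadj : ∀ p < A.length, G.Adj (g p) (g (p + 1)) := by
    intro p hp
    have hA := A.adj_getVert_succ hp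
    have hC := C.adj_getVert_succ (hlen ▸ hp)
    by_cases hpX : p ∈ X <;> by_cases hp1X : p + 1 ∈ X <;>
      simp only [g, hpX, hp1X, if_true, if_false]
    · exact hA
    · exact hX p hpX (p + 1) hp1X (.inl rfl) ▸ hA
    · exact hX (p + 1) hp1X p hpX (.inr rfl) ▸ hA
    · exact hC
  refine ⟨(ofFn g A.length hadj).copy (by simp [g]) (hg _ le_rfl), by simp [length_ofFn],
    fun p => ?_⟩
  rw [getVert_copy, getVert_ofFn]
  rcases le_total p A.length with hp | hp
  · rw [min_eq_left hp]
  · exact (min_eq_right hp ▸ hg _ le_rfl).trans (hg _ hp).symm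

end SimpleGraph.Walk

def runClosure (S : Set ℕ) (M : Finset ℕ) : Set ℕ :=
  {p | ∃ q ∈ S, (Finset.uIcc p q).erase q ⊆ M}

namespace runClosure

variable {S : Set ℕ} {M : Finset ℕ}

theorem subset : S ⊆ runClosure S M :=
  fun p hp => ⟨p, hp, by simp⟩

theorem mem_of_adjacent {p p' : ℕ} (hp : p ∈ runClosure S M) (hp' : p' ∈ M)
    (hadj : p' = p + 1 ∨ p = p' + 1) : p' ∈ runClosure S M := by
  obtain ⟨q, hq, hsub⟩ := hp
  refine ⟨q, hq, fun r hr => ?_⟩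
  by_cases hrp' : r = p'
  · exact hrp' ▸ hp'
  · refine hsub ?_
    simp only [Finset.mem_erase, Finset.mem_uIcc] at hr ⊢
    omega

theorem exists_dist_le_card {p : ℕ} (hp : p ∈ runClosure S M) :
    ∃ q ∈ S, Nat.dist p q ≤ M.card := by
  obtain ⟨q, hq, hsub⟩ := hp
  refine ⟨q, hq, ?_⟩
  have := Finset.card_le_card hsub
  rw [Finset.card_erase_of_mem Finset.right_mem_uIcc, Nat.card_uIcc] at this
  unfold Nat.dist
  omega

end runClosure

theorem exists_chain_of_reflGen_chain {α : Type*} {r : α → α → Prop} :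
    ∀ (n : ℕ) (g : ℕ → α), (∀ i < n, Relation.ReflGen r (g i) (g (i + 1))) →
      ∃ L ≤ n, ∃ h : ℕ → α, h 0 = g 0 ∧ h L = g n ∧ Set.range h ⊆ Set.range g ∧
        ∀ i < L, r (h i) (h (i + 1))
  | 0, g, _ => ⟨0, le_rfl, g, rfl, rfl, le_rfl, fun _ hi => absurd hi (Nat.not_lt_zero _)⟩
  | n + 1, g, hg => by
    obtain ⟨L, hL, h, h0, hL', hrange, hchain⟩ :=
      exists_chain_of_reflGen_chain n (fun i => g (i + 1)) fun i hi => hg (i + 1) (by omega)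
    have hrange' : Set.range h ⊆ Set.range g :=
      hrange.trans fun _ ⟨i, hi⟩ => ⟨i + 1, hi⟩
    rcases (Relation.reflGen_iff _ _ _).1 (hg 0 n.succ_pos) with heq | hr
    · exact ⟨L, by omega, h, h0.trans heq, hL', hrange', hchain⟩
    · refine ⟨L + 1, by omega, fun | 0 => g 0 | i + 1 => h i, rfl, hL', ?_, ?_⟩
      · rintro _ ⟨_ | i, rfl⟩
        exacts [⟨0, rfl⟩, hrange' ⟨i, rfl⟩]
      · rintro (_ | i) hi
        exacts [by simpa [h0] using hr, hchain i (by omega)]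

section Reconfiguration

variable {V : Type*} {G : SimpleGraph V} {s t : V}

theorem eq_or_tjAdjacent_of_getVert_ne {A B : G.Walk s t} (hlen : A.length = B.length) (m : ℕ)
    (h : ∀ p, A.getVert p ≠ B.getVert p → p = m) : A = B ∨ TJAdjacent G A B := by
  by_cases hm : A.getVert m = B.getVert m
  · exact .inl <| Walk.ext_getVert fun p => by_contra fun hp => (h p hp ▸ hp) hm
  · exact .inr ⟨hlen, m, hm, h⟩

theorem exists_finset_getVert_eq_of_tjAdjacent (f : ℕ → G.Walk s t) :
    ∀ n, (∀ i < n, TJAdjacent G (f i) (f (i + 1))) →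
      ∃ M : Finset ℕ, M.card ≤ n ∧ ∀ i ≤ n, ∀ p ∉ M, (f i).getVert p = (f 0).getVert p
  | 0, _ => ⟨∅, le_rfl, fun i hi p _ => by rw [Nat.le_zero.1 hi]⟩
  | n + 1, hadj => by
    classical
    obtain ⟨M, hcard, hM⟩ :=
      exists_finset_getVert_eq_of_tjAdjacent f n fun i hi => hadj i (by omega)
    obtain ⟨m, -, hm⟩ := (hadj n n.lt_succ_self).2
    refine ⟨insert m M, (Finset.card_insert_le m M).trans (by omega), fun i hi p hp => ?_⟩
    rw [Finset.mem_insert, not_or] at hp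
    rcases Nat.lt_or_eq_of_le hi with hi | rfl
    · exact hM i (by omega) p hp.2
    · rw [← hM n le_rfl p hp.2]
      exact by_contra fun hne => hp.1 (hm p (Ne.symm hne))

theorem exists_lazy_tjSeq_near_diff (f : ℕ → G.Walk s t) (n : ℕ)
    (hshort : ∀ i ≤ n, IsShortestSTPath G (f i))
    (hadj : ∀ i < n, TJAdjacent G (f i) (f (i + 1))) :
    ∃ W : ℕ → G.Walk s t, W 0 = f 0 ∧ W n = f n ∧ (∀ i, IsShortestSTPath G (W i)) ∧
      ∀ i < n, Relation.ReflGen (fun A B => TJAdjacent G A B ∧ ∀ p, A.getVert p ≠ B.getVert p →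
        ∃ q, (f 0).getVert q ≠ (f n).getVert q ∧ Nat.dist p q ≤ n) (W i) (W (i + 1)) := by
  classical
  obtain ⟨M, hMcard, hM⟩ := exists_finset_getVert_eq_of_tjAdjacent f n hadj
  set X := runClosure {q | (f 0).getVert q ≠ (f n).getVert q} M
  have hlen (i : ℕ) : (f (min i n)).length = G.dist s t := (hshort _ (min_le_right i n)).2
  -- `f` is frozen after step `n` so that the splice exists for every index.
  choose W hWlen hWget using fun i => (f (min i n)).exists_getVert_eq_ite (f 0)
    ((hlen i).trans (hlen 0).symm) X fun p hp q hq hpq =>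
      hM _ (min_le_right i n) q fun hqM => hq (runClosure.mem_of_adjacent hp hqM hpq)
  refine ⟨W, Walk.ext_getVert fun p => ?_, Walk.ext_getVert fun p => ?_, fun i => ?_,
    fun i hi => ?_⟩
  · rw [hWget, Nat.zero_min]
    split_ifs <;> rfl
  · rw [hWget, min_self]
    split_ifs with hp
    · rfl
    · exact not_not.1 fun hne => hp (runClosure.subset hne)
  · exact ⟨(W i).isPath_of_length_eq_dist ((hWlen i).trans (hlen i)), (hWlen i).trans (hlen i)⟩
  obtain ⟨m, -, hm⟩ := (hadj i hi).2
  have hdiff (p : ℕ) (hp : (W i).getVert p ≠ (W (i + 1)).getVert p) : p ∈ X ∧ p = m := by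
    rw [hWget, hWget, min_eq_left hi.le, min_eq_left hi] at hp
    by_cases hpX : p ∈ X
    · rw [if_pos hpX, if_pos hpX] at hp
      exact ⟨hpX, hm p hp⟩
    · simp [hpX] at hp
  have hWlen' : (W i).length = (W (i + 1)).length := by rw [hWlen, hWlen, hlen, hlen]
  rcases eq_or_tjAdjacent_of_getVert_ne hWlen' m fun p hp => (hdiff p hp).2 with heq | hTJ
  · exact heq ▸ .refl
  · refine .single ⟨hTJ, fun p hp => ?_⟩
    obtain ⟨q, hq, hdist⟩ := runClosure.exists_dist_le_card (hdiff p hp).1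
    exact ⟨q, hq, hdist.trans hMcard⟩

end Reconfiguration

theorem stmt_3_general {V : Type*} (G : SimpleGraph V) (s t : V)
    (P Q : G.Walk s t) (ℓ : ℕ)
    (h : ∃ ℓ' ≤ ℓ, TJSeq G P Q ℓ') :
    ∃ ℓ' ≤ ℓ, ∃ f : ℕ → G.Walk s t, f 0 = P ∧ f ℓ' = Q ∧
      (∀ i ≤ ℓ', IsShortestSTPath G (f i)) ∧
      (∀ i < ℓ', TJAdjacent G (f i) (f (i + 1))) ∧
      ∀ i < ℓ', ∀ p : ℕ, (f i).getVert p ≠ (f (i + 1)).getVert p →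
        ∃ q : ℕ, P.getVert q ≠ Q.getVert q ∧ Nat.dist p q ≤ ℓ := by
  obtain ⟨n, hn, f, rfl, rfl, hshort, hadj⟩ := h
  obtain ⟨W, hW0, hWn, hWshort, hstep⟩ := exists_lazy_tjSeq_near_diff f n hshort hadj
  obtain ⟨L, hL, g, hg0, hgL, hrange, hchain⟩ := exists_chain_of_reflGen_chain n W hstep
  refine ⟨L, hL.trans hn, g, hg0.trans hW0, hgL.trans hWn, fun i _ => ?_,
    fun i hi => (hchain i hi).1, fun i hi p hp => ?_⟩
  · obtain ⟨j, hj⟩ := hrange ⟨i, rfl⟩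
    exact hj ▸ hWshort j
  · obtain ⟨q, hq, hdist⟩ := (hchain i hi).2 p hp
    exact ⟨q, hq, hdist.trans hn⟩

/-- Let `S` be the set of positions at which `P` and `Q` differ. If there
is a TJ-reconfiguration sequence from `P` to `Q` of length at most `ℓ`, then there is one of
length at most `ℓ` in which every modified position is within index-distance `ℓ` of some
position of `S`. -/
theorem stmt_3 {V : Type*} [Fintype V] (G : SimpleGraph V) (s t : V)
    (P Q : G.Walk s t) (hP : IsShortestSTPath G P) (hQ : IsShortestSTPath G Q) (ℓ : ℕ)
    (h : ∃ ℓ' ≤ ℓ, TJSeq G P Q ℓ') :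
    ∃ ℓ' ≤ ℓ, ∃ f : ℕ → G.Walk s t, f 0 = P ∧ f ℓ' = Q ∧
      (∀ i ≤ ℓ', IsShortestSTPath G (f i)) ∧
      (∀ i < ℓ', TJAdjacent G (f i) (f (i + 1))) ∧
      ∀ i < ℓ', ∀ p : ℕ, (f i).getVert p ≠ (f (i + 1)).getVert p →
        ∃ q : ℕ, P.getVert q ≠ Q.getVert q ∧ Nat.dist p q ≤ ℓ :=
  stmt_3_general G s t P Q ℓ h
end

section
/- Let G be a finite simple graph and C a set of vertices of G such that every connected component of the induced subgraph G − C is a clique. Then every shortest path in G contains at most 3·|C| + 2 vertices in total; in particular it contains at most |C| vertices of C, and the non-C vertices of the path form at most |C| + 1 maximal segments each of which lies in a single clique component of G − C and contains at most two vertices. -/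
/-! On a shortest walk the vertices at positions `i` and `i + 2` are distinct (a shortest walk is
a path) and nonadjacent (otherwise the walk could be shortcut). So no three consecutive vertices
avoid `C`: they would lie in one component of `G − C`, which is a clique. Hence every maximal run
of vertices outside `C` has at most two vertices, and a run is determined by the vertex of `C`
just before it, or by starting at position `0`: there are at most `|C| + 1` runs, so at most
`2|C| + 2` vertices outside `C`, besides the at most `|C|` distinct vertices in `C`. -/

open SimpleGraph

open scoped Classical

/-- `[a, b]` is a maximal segment of positions of the walk `W` whose vertices avoid `C`. -/
def IsMaxSegment {V : Type*} [DecidableEq V] {u v : V} (G : SimpleGraph V) (C : Finset V)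
    (W : G.Walk u v) (a b : ℕ) : Prop :=
  a ≤ b ∧ b ≤ W.length ∧ (∀ i, a ≤ i → i ≤ b → W.getVert i ∉ C) ∧
    (a = 0 ∨ W.getVert (a - 1) ∈ C) ∧ (b = W.length ∨ W.getVert (b + 1) ∈ C)

namespace Nat

lemma exists_run_start {P : ℕ → Prop} {i : ℕ} (hi : P i) :
    ∃ a ≤ i, (∀ k, a ≤ k → k ≤ i → P k) ∧ (a = 0 ∨ ¬P (a - 1)) := by
  induction i with
  | zero => exact ⟨0, le_rfl, fun k _ hk => le_zero.mp hk ▸ hi, Or.inl rfl⟩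
  | succ i ih =>
    by_cases hPi : P i
    · obtain ⟨a, hai, hrun, hstart⟩ := ih hPi
      refine ⟨a, by omega, fun k hak hki => ?_, hstart⟩
      rcases Nat.lt_or_eq_of_le hki with hk | rfl
      exacts [hrun k hak (by omega), hi]
    · exact ⟨i + 1, le_rfl, fun k h₁ h₂ => le_antisymm h₂ h₁ ▸ hi, Or.inr hPi⟩

lemma exists_run_end {P : ℕ → Prop} {i n : ℕ} (hin : i ≤ n) (hi : P i) :
    ∃ b, i ≤ b ∧ b ≤ n ∧ (∀ k, i ≤ k → k ≤ b → P k) ∧ (b = n ∨ ¬P (b + 1)) := by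
  induction h : n - i generalizing i with
  | zero => exact ⟨i, le_rfl, hin, fun k h₁ h₂ => le_antisymm h₂ h₁ ▸ hi, Or.inl (by omega)⟩
  | succ d ih =>
    by_cases hPi : P (i + 1)
    · obtain ⟨b, hib, hbn, hrun, hend⟩ := ih (by omega) hPi (by omega)
      refine ⟨b, by omega, hbn, fun k hik hkb => ?_, hend⟩
      rcases Nat.eq_or_lt_of_le hik with rfl | hk
      exacts [hi, hrun k hk hkb]
    · exact ⟨i, le_rfl, hin, fun k h₁ h₂ => le_antisymm h₂ h₁ ▸ hi, Or.inr hPi⟩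

end Nat

namespace SimpleGraph.Walk

variable {V : Type*} {G : SimpleGraph V} {u v : V} {W : G.Walk u v} {i : ℕ}

lemma not_adj_getVert_add_two (hW : W.length = G.dist u v) (hi : i + 2 ≤ W.length) :
    ¬G.Adj (W.getVert i) (W.getVert (i + 2)) := fun hadj => by
  have := G.dist_le ((W.take i).append (cons hadj (W.drop (i + 2))))
  simp only [length_append, take_length, length_cons, drop_length] at this
  omega

lemma getVert_add_two_notMem {S : Set V}
    (hS : ∀ x y : S, (G.induce S).Reachable x y → x ≠ y → (G.induce S).Adj x y)
    (hW : W.length = G.dist u v) (hi : i + 2 ≤ W.length) (h₀ : W.getVert i ∈ S)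
    (h₁ : W.getVert (i + 1) ∈ S) : W.getVert (i + 2) ∉ S := by
  intro h₂
  have hadj₀₁ : (G.induce S).Adj ⟨_, h₀⟩ ⟨_, h₁⟩ := W.adj_getVert_succ (by omega)
  have hadj₁₂ : (G.induce S).Adj ⟨_, h₁⟩ ⟨_, h₂⟩ := W.adj_getVert_succ (by omega)
  have hreach := hadj₀₁.reachable.trans hadj₁₂.reachable
  have hne : W.getVert i ≠ W.getVert (i + 2) := fun h => by
    have := (W.isPath_of_length_eq_dist hW).getVert_injOn (show i ≤ W.length by omega)
      (show i + 2 ≤ W.length by omega) h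
    omega
  exact W.not_adj_getVert_add_two hW hi (hS _ _ hreach (Subtype.coe_ne_coe.mp hne))

lemma reachable_induce_getVert {S : Set V} {j : ℕ} (hij : i ≤ j) (hji : j ≤ i + 1)
    (hj : j ≤ W.length) (hSi : W.getVert i ∈ S) (hSj : W.getVert j ∈ S) :
    (G.induce S).Reachable ⟨_, hSi⟩ ⟨_, hSj⟩ := by
  obtain rfl | rfl : j = i ∨ j = i + 1 := by omega
  · rfl
  · exact Adj.reachable (G := G.induce S) (W.adj_getVert_succ (by omega))

end SimpleGraph.Walk

section MaxSegment

variable {V : Type*} [DecidableEq V] {G : SimpleGraph V} {C : Finset V} {u v : V}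
  {W : G.Walk u v}

noncomputable def maxSegments (G : SimpleGraph V) (C : Finset V) (W : G.Walk u v) :
    Finset (ℕ × ℕ) :=
  (Finset.range (W.length + 1) ×ˢ Finset.range (W.length + 1)).filter
    fun ab => IsMaxSegment G C W ab.1 ab.2

lemma mem_maxSegments {a b : ℕ} : (a, b) ∈ maxSegments G C W ↔ IsMaxSegment G C W a b := by
  simp only [maxSegments, Finset.mem_filter, Finset.mem_product, Finset.mem_range,
    and_iff_right_iff_imp]
  exact fun h => ⟨by have := h.1; have := h.2.1; omega, by have := h.2.1; omega⟩

lemma exists_isMaxSegment {i : ℕ} (hi : i ≤ W.length) (hiC : W.getVert i ∉ C) :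
    ∃ a b, IsMaxSegment G C W a b ∧ a ≤ i ∧ i ≤ b := by
  obtain ⟨a, hai, hleft, hstart⟩ := Nat.exists_run_start (P := fun k => W.getVert k ∉ C) hiC
  obtain ⟨b, hib, hbW, hright, hend⟩ :=
    Nat.exists_run_end (P := fun k => W.getVert k ∉ C) hi hiC
  refine ⟨a, b, ⟨by omega, hbW, fun k hak hkb => ?_, by simpa using hstart,
    by simpa using hend⟩, hai, hib⟩
  rcases le_total k i with hki | hik
  exacts [hleft k hak hki, hright k hik hkb]

namespace IsMaxSegment

lemma right_unique {a b d : ℕ} (hb : IsMaxSegment G C W a b) (hd : IsMaxSegment G C W a d) :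
    b = d := by
  have key : ∀ {b d}, IsMaxSegment G C W a b → IsMaxSegment G C W a d → ¬b < d :=
    fun ⟨_, _, _, _, hend⟩ ⟨_, hd, hrun, _, _⟩ hlt =>
      hend.elim (by omega) (hrun _ (by omega) (by omega))
  exact le_antisymm (not_lt.mp (key hd hb)) (not_lt.mp (key hb hd))

lemma sub_le_one {a b : ℕ} (hab : IsMaxSegment G C W a b)
    (hC : ∀ x y : ↥((↑C : Set V)ᶜ), (G.induce ((↑C : Set V)ᶜ)).Reachable x y → x ≠ y →
      (G.induce ((↑C : Set V)ᶜ)).Adj x y)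
    (hW : W.length = G.dist u v) : b - a ≤ 1 := by
  obtain ⟨_, hbW, hrun, _, _⟩ := hab
  by_contra! h
  exact W.getVert_add_two_notMem hC hW (by omega) (hrun a le_rfl (by omega))
    (hrun (a + 1) (by omega) (by omega)) (hrun (a + 2) (by omega) (by omega))

end IsMaxSegment

lemma card_maxSegments_le (hW : W.IsPath) : (maxSegments G C W).card ≤ C.card + 1 := by
  rw [← Finset.card_insertNone]
  refine Finset.card_le_card_of_injOn
    (fun ab => if ab.1 = 0 then none else some (W.getVert (ab.1 - 1))) ?_ ?_
  · rintro ⟨a, b⟩ hab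
    obtain ⟨-, -, -, hstart, -⟩ := mem_maxSegments.mp hab
    by_cases ha : a = 0 <;> simp_all
  · rintro ⟨a, b⟩ hab ⟨c, d⟩ hcd heq
    have hab := mem_maxSegments.mp hab
    have hcd := mem_maxSegments.mp hcd
    obtain rfl : a = c := by
      have := hab.1; have := hab.2.1; have := hcd.1; have := hcd.2.1
      by_cases ha : a = 0 <;> by_cases hc : c = 0
      · omega
      · simp [ha, hc] at heq
      · simp [ha, hc] at heq
      · simp only [ha, hc, if_false, Option.some.injEq] at heq
        have := hW.getVert_injOn (show a - 1 ≤ W.length by omega)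
          (show c - 1 ≤ W.length by omega) heq
        omega
    rw [hab.right_unique hcd]

lemma card_filter_getVert_mem_le (hW : W.IsPath) :
    ((Finset.range (W.length + 1)).filter fun i => W.getVert i ∈ C).card ≤ C.card :=
  Finset.card_le_card_of_injOn W.getVert (fun _ hi => (Finset.mem_filter.mp hi).2)
    fun _ hi _ hj h => hW.getVert_injOn
      (Nat.lt_succ_iff.mp (Finset.mem_range.mp (Finset.mem_filter.mp hi).1))
      (Nat.lt_succ_iff.mp (Finset.mem_range.mp (Finset.mem_filter.mp hj).1)) h

lemma card_filter_getVert_notMem_le (hshort : ∀ a b, IsMaxSegment G C W a b → b - a ≤ 1) :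
    ((Finset.range (W.length + 1)).filter fun i => W.getVert i ∉ C).card ≤
      2 * (maxSegments G C W).card := by
  have hcover : ((Finset.range (W.length + 1)).filter fun i => W.getVert i ∉ C) ⊆
      (maxSegments G C W).biUnion fun ab => Finset.Icc ab.1 ab.2 := by
    intro i hi
    simp only [Finset.mem_filter, Finset.mem_range] at hi
    obtain ⟨a, b, hab, hai, hib⟩ := exists_isMaxSegment (by omega) hi.2
    exact Finset.mem_biUnion.mpr ⟨(a, b), mem_maxSegments.mpr hab, Finset.mem_Icc.mpr ⟨hai, hib⟩⟩
  calc _ ≤ _ := Finset.card_le_card hcover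
    _ ≤ ∑ ab ∈ maxSegments G C W, (Finset.Icc ab.1 ab.2).card := Finset.card_biUnion_le
    _ ≤ (maxSegments G C W).card • 2 := Finset.sum_le_card_nsmul _ _ _ fun ⟨a, b⟩ hab => by
          have := hshort a b (mem_maxSegments.mp hab)
          simp only [Nat.card_Icc]
          omega
    _ = _ := by rw [smul_eq_mul, mul_comm]

end MaxSegment

theorem stmt_5_general {V : Type*} [DecidableEq V] (G : SimpleGraph V) (C : Finset V)
    (hclique : ∀ x y : ↥((↑C : Set V)ᶜ),
      (G.induce ((↑C : Set V)ᶜ)).Reachable x y → x ≠ y → (G.induce ((↑C : Set V)ᶜ)).Adj x y)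
    (u v : V) (W : G.Walk u v) (hlen : W.length = G.dist u v) :
    W.support.length ≤ 3 * C.card + 2 ∧
    (W.support.filter fun x => x ∈ C).length ≤ C.card ∧
    ((Finset.range (W.length + 1) ×ˢ Finset.range (W.length + 1)).filter
        fun ab => IsMaxSegment G C W ab.1 ab.2).card ≤ C.card + 1 ∧
    ∀ a b, IsMaxSegment G C W a b →
      b - a ≤ 1 ∧
      ∀ i j, a ≤ i → i ≤ b → a ≤ j → j ≤ b →
        ∀ (hi : W.getVert i ∈ ((↑C : Set V)ᶜ : Set V))
          (hj : W.getVert j ∈ ((↑C : Set V)ᶜ : Set V)),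
          (G.induce ((↑C : Set V)ᶜ)).Reachable ⟨W.getVert i, hi⟩ ⟨W.getVert j, hj⟩ := by
  have hW := W.isPath_of_length_eq_dist hlen
  have hshort : ∀ a b, IsMaxSegment G C W a b → b - a ≤ 1 :=
    fun a b hab => hab.sub_le_one hclique hlen
  have hsegs : (maxSegments G C W).card ≤ C.card + 1 := card_maxSegments_le hW
  refine ⟨?_, ?_, hsegs, fun a b hab => ⟨hshort a b hab, ?_⟩⟩
  · have hsplit := Finset.card_filter_add_card_filter_not (s := Finset.range (W.length + 1))
      (fun i => W.getVert i ∈ C)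
    have := card_filter_getVert_mem_le (C := C) hW
    have := card_filter_getVert_notMem_le hshort
    rw [W.length_support, ← Finset.card_range (W.length + 1), ← hsplit]
    omega
  · rw [← List.toFinset_card_of_nodup (hW.support_nodup.filter _)]
    exact Finset.card_le_card fun x hx => by
      simpa using (List.mem_filter.mp (List.mem_toFinset.mp hx)).2
  · intro i j hai hib haj hjb hi hj
    have := hshort a b hab
    have := hab.2.1
    rcases le_total i j with hij | hji
    · exact W.reachable_induce_getVert hij (by omega) (by omega) hi hj
    · exact (W.reachable_induce_getVert hji (by omega) (by omega) hj hi).symm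

/-- If every connected component of `G − C` is a clique, then every
shortest path `W` in `G` has at most `3|C| + 2` vertices; it has at most `|C|` vertices in
`C`, and its non-`C` vertices form at most `|C| + 1` maximal segments, each of which has at
most two vertices and lies in a single (clique) component of `G − C`. -/
theorem stmt_5 {V : Type*} [Fintype V] [DecidableEq V] (G : SimpleGraph V) (C : Finset V)
    (hclique : ∀ x y : ↥((↑C : Set V)ᶜ),
      (G.induce ((↑C : Set V)ᶜ)).Reachable x y → x ≠ y → (G.induce ((↑C : Set V)ᶜ)).Adj x y)
    (u v : V) (W : G.Walk u v) (hpath : W.IsPath) (hlen : W.length = G.dist u v) :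
    W.support.length ≤ 3 * C.card + 2 ∧
    (W.support.filter fun x => x ∈ C).length ≤ C.card ∧
    ((Finset.range (W.length + 1) ×ˢ Finset.range (W.length + 1)).filter
        fun ab => IsMaxSegment G C W ab.1 ab.2).card ≤ C.card + 1 ∧
    ∀ a b, IsMaxSegment G C W a b →
      b - a ≤ 1 ∧
      ∀ i j, a ≤ i → i ≤ b → a ≤ j → j ≤ b →
        ∀ (hi : W.getVert i ∈ ((↑C : Set V)ᶜ : Set V))
          (hj : W.getVert j ∈ ((↑C : Set V)ᶜ : Set V)),
          (G.induce ((↑C : Set V)ᶜ)).Reachable ⟨W.getVert i, hi⟩ ⟨W.getVert j, hj⟩ :=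
  stmt_5_general G C hclique u v W hlen
end

section
/- Let G be a finite simple graph, M a module of G, and W a shortest path in G that contains two distinct vertices of M. Then either all vertices of W lie in M, or W has length at most 2. -/
/-!
Along a shortest path, the index distance of two vertices is their graph distance, so the path is
induced: two of its vertices are adjacent exactly when they are consecutive. A vertex `v ∉ M` of
the path next to a vertex of `M` is adjacent to all of `M`, so the (at least two) vertices of `M`
on the path are exactly the two neighbours of `v`. A vertex two steps beyond `v` would lie outside
`M` and be adjacent to only one of them, so the path has length at most `2`.
-/

open SimpleGraph

def IsModule {V : Type*} (G : SimpleGraph V) (M : Set V) : Prop :=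
  ∀ x ∈ M, ∀ y ∈ M, ∀ z ∉ M, (G.Adj x z ↔ G.Adj y z)

lemma Nat.exists_between_not_and_succ {p : ℕ → Prop} {a c : ℕ} (hac : a ≤ c) (ha : ¬p a)
    (hc : p c) : ∃ i, a ≤ i ∧ i < c ∧ ¬p i ∧ p (i + 1) := by
  induction c, hac using Nat.le_induction with
  | base => exact absurd hc ha
  | succ c hac ih =>
    by_cases hpc : p c
    · obtain ⟨i, hai, hic, hpi, hpi'⟩ := ih hpc
      exact ⟨i, hai, hic.trans c.lt_succ_self, hpi, hpi'⟩
    · exact ⟨c, hac, c.lt_succ_self, hpc, hc⟩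

lemma exists_consecutive_mem_and_not_mem {α : Type*} {f : ℕ → α} {s : Set α} {n a c : ℕ}
    (ha : a ≤ n) (hc : c ≤ n) (has : f a ∈ s) (hcs : f c ∉ s) :
    ∃ k m, k ≤ n ∧ m ≤ n ∧ f k ∉ s ∧ f m ∈ s ∧ (m + 1 = k ∨ k + 1 = m) := by
  rcases le_total a c with hac | hca
  · obtain ⟨i, -, hic, his, his'⟩ :=
      Nat.exists_between_not_and_succ (p := (f · ∉ s)) hac (not_not.2 has) hcs
    exact ⟨i + 1, i, by omega, by omega, his', not_not.1 his, Or.inl rfl⟩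
  · obtain ⟨i, -, hia, his, his'⟩ :=
      Nat.exists_between_not_and_succ (p := (f · ∈ s)) hca hcs has
    exact ⟨i, i + 1, by omega, by omega, his, his', Or.inr rfl⟩

namespace SimpleGraph

variable {V : Type*} {G : SimpleGraph V}

lemma Walk.dist_getVert_getVert_of_length_eq_dist {u v : V} {p : G.Walk u v}
    (hp : p.length = G.dist u v) {i j : ℕ} (hij : i ≤ j) (hj : j ≤ p.length) :
    G.dist (p.getVert i) (p.getVert j) = j - i := by
  have hsub : ((p.drop i).take (j - i)).IsSubwalk p :=
    (isSubwalk_take _ _).trans (isSubwalk_drop _ _)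
  have hend : (p.drop i).getVert (j - i) = p.getVert j := by
    rw [drop_getVert, Nat.add_sub_cancel' hij]
  rw [← hend, ← length_eq_dist_of_subwalk hp hsub, take_length, drop_length]
  omega

lemma Walk.adj_getVert_iff_of_length_eq_dist {u v : V} {p : G.Walk u v}
    (hp : p.length = G.dist u v) {i j : ℕ} (hi : i ≤ p.length) (hj : j ≤ p.length) :
    G.Adj (p.getVert i) (p.getVert j) ↔ i + 1 = j ∨ j + 1 = i := by
  rw [← dist_eq_one_iff_adj]
  rcases le_total i j with hij | hji
  · rw [p.dist_getVert_getVert_of_length_eq_dist hp hij hj]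
    omega
  · rw [dist_comm, p.dist_getVert_getVert_of_length_eq_dist hp hji hi]
    omega

end SimpleGraph

namespace IsModule

variable {V : Type*} {G : SimpleGraph V} {M : Set V} {f : ℕ → V} {n : ℕ}

lemma succ_eq_or_eq_succ_of_consecutive (hM : IsModule G M)
    (hf : ∀ i ≤ n, ∀ j ≤ n, G.Adj (f i) (f j) ↔ i + 1 = j ∨ j + 1 = i)
    {k m a : ℕ} (hk : k ≤ n) (hm : m ≤ n) (ha : a ≤ n) (hkM : f k ∉ M) (hmM : f m ∈ M)
    (hkm : m + 1 = k ∨ k + 1 = m) (haM : f a ∈ M) : a + 1 = k ∨ k + 1 = a :=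
  (hf a ha k hk).1 ((hM (f m) hmM (f a) haM (f k) hkM).1 ((hf m hm k hk).2 hkm))

lemma le_two_of_induced_path (hM : IsModule G M)
    (hf : ∀ i ≤ n, ∀ j ≤ n, G.Adj (f i) (f j) ↔ i + 1 = j ∨ j + 1 = i)
    {a b c : ℕ} (ha : a ≤ n) (hb : b ≤ n) (hc : c ≤ n) (hab : a ≠ b) (haM : f a ∈ M)
    (hbM : f b ∈ M) (hcM : f c ∉ M) : n ≤ 2 := by
  obtain ⟨k, m, hk, hm, hkM, hmM, hkm⟩ := exists_consecutive_mem_and_not_mem ha hc haM hcM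
  have hak := hM.succ_eq_or_eq_succ_of_consecutive hf hk hm ha hkM hmM hkm haM
  have hbk := hM.succ_eq_or_eq_succ_of_consecutive hf hk hm hb hkM hmM hkm hbM
  have hkM' : f (k - 1) ∈ M ∧ f (k + 1) ∈ M := by
    rcases (by omega : a + 1 = k ∧ b = k + 1 ∨ b + 1 = k ∧ a = k + 1) with ⟨rfl, rfl⟩ | ⟨rfl, rfl⟩
    exacts [⟨haM, hbM⟩, ⟨hbM, haM⟩]
  by_contra! hn
  obtain ⟨e, m', he, hm'n, hm'M, hem'⟩ : ∃ e m', e ≤ n ∧ m' ≤ n ∧ f m' ∈ M ∧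
      (e = k + 2 ∧ m' = k + 1 ∨ e + 2 = k ∧ m' + 1 = k) := by
    by_cases hk2 : k + 2 ≤ n
    · exact ⟨k + 2, k + 1, hk2, by omega, hkM'.2, by omega⟩
    · exact ⟨k - 2, k - 1, by omega, by omega, hkM'.1, by omega⟩
  have heM : f e ∉ M := fun heM => by
    have := hM.succ_eq_or_eq_succ_of_consecutive hf hk hm he hkM hmM hkm heM
    omega
  have hae := hM.succ_eq_or_eq_succ_of_consecutive hf he hm'n ha heM hm'M (by omega) haM
  have hbe := hM.succ_eq_or_eq_succ_of_consecutive hf he hm'n hb heM hm'M (by omega) hbM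
  omega

end IsModule

theorem stmt_7_general {V : Type*} (G : SimpleGraph V) (M : Set V) (hM : IsModule G M)
    (s t : V) (W : G.Walk s t) (hlen : W.length = G.dist s t)
    (x y : V) (hx : x ∈ W.support) (hy : y ∈ W.support) (hxM : x ∈ M) (hyM : y ∈ M)
    (hxy : x ≠ y) :
    (∀ z ∈ W.support, z ∈ M) ∨ W.length ≤ 2 := by
  refine or_iff_not_imp_left.2 fun hW => ?_
  obtain ⟨z, hz, hzM⟩ := not_forall₂.1 hW
  simp only [Walk.mem_support_iff_exists_getVert] at hx hy hz
  obtain ⟨a, rfl, ha⟩ := hx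
  obtain ⟨b, rfl, hb⟩ := hy
  obtain ⟨c, rfl, hc⟩ := hz
  exact hM.le_two_of_induced_path
    (fun i hi j hj => W.adj_getVert_iff_of_length_eq_dist hlen hi hj)
    ha hb hc (fun hab => hxy (congrArg W.getVert hab)) hxM hyM hzM

/-- If a shortest path `W` contains two distinct vertices of a module `M`,
then either all vertices of `W` lie in `M`, or `W` has length at most `2`. -/
theorem stmt_7 {V : Type*} [Fintype V] (G : SimpleGraph V) (M : Set V) (hM : IsModule G M)
    (s t : V) (W : G.Walk s t) (hpath : W.IsPath) (hlen : W.length = G.dist s t)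
    (x y : V) (hx : x ∈ W.support) (hy : y ∈ W.support) (hxM : x ∈ M) (hyM : y ∈ M)
    (hxy : x ≠ y) :
    (∀ z ∈ W.support, z ∈ M) ∨ W.length ≤ 2 :=
  stmt_7_general G M hM s t W hlen x y hx hy hxM hyM hxy
end

section
/- Let G be a finite simple graph, M a module of G, and s, t ∈ M with dist_G(s,t) ≥ 3. Then every shortest path from s to t in G has all of its vertices in M. -/
open SimpleGraph

theorem aux_walk_in_module {V : Type*} (G : SimpleGraph V) (M : Set V)
    (H : ∀ u ∈ M, ∀ v, v ∉ M → ¬ G.Adj u v) :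
    ∀ {a b : V} (W : G.Walk a b), a ∈ M → ∀ x ∈ W.support, x ∈ M := by
  intro a b W
  induction W with
  | nil =>
    intro ha x hx
    simp only [Walk.support_nil, List.mem_singleton] at hx
    subst hx; exact ha
  | cons h p ih =>
    intro ha x hx
    rcases List.mem_cons.mp (by simpa [Walk.support_cons] using hx) with rfl | hx'
    · exact ha
    · refine ih ?_ x hx'
      by_contra hb
      exact H _ ha _ hb h

/-- If `M` is a module, `s, t ∈ M` and `dist_G(s,t) ≥ 3`, then every
shortest path from `s` to `t` has all of its vertices in `M`. -/
theorem stmt_8 {V : Type*} [Fintype V] (G : SimpleGraph V) (M : Set V) (hM : IsModule G M)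
    (s t : V) (hs : s ∈ M) (ht : t ∈ M) (hd : 3 ≤ G.dist s t)
    (W : G.Walk s t) (hpath : W.IsPath) (hlen : W.length = G.dist s t) :
    ∀ x ∈ W.support, x ∈ M := by
  have H : ∀ u ∈ M, ∀ v, v ∉ M → ¬ G.Adj u v := by
    intro u hu v hv huv
    have hsv : G.Adj s v := (hM s hs u hu v hv).mpr huv
    have htv : G.Adj t v := (hM t ht u hu v hv).mpr huv
    have : G.dist s t ≤ (Walk.cons hsv (Walk.cons htv.symm Walk.nil)).length :=
      SimpleGraph.dist_le _
    simp [Walk.length_cons] at this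
    omega
  exact aux_walk_in_module G M H W hs
end

section
/- Let G be a finite simple graph, M a module of G, and let W and W' be shortest paths from s to t in G, each of which contains at most one vertex from each module of a fixed partition of V(G) into modules that includes M. If w ∈ V(W) ∩ M and w' ∈ V(W') ∩ M, then dist_G(s, w) = dist_G(s, w'); that is, the module M intersects W and W' at the same position. -/
open SimpleGraph

private lemma aux_step {V : Type*} [DecidableEq V] {G : SimpleGraph V} {M : Set V} (hM : IsModule G M)
    {s t : V} (W : G.Walk s t) (hWlen : W.length = G.dist s t)
    {w w' : V} (hw : w ∈ W.support) (hwM : w ∈ M) (hw'M : w' ∈ M)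
    (hone : ∀ x ∈ W.support, x ∈ M → x = w) (hsM : s ∉ M) :
    G.dist s w' ≤ G.dist s w := by
  have hws : w ≠ s := fun h => hsM (h ▸ hwM)
  set P := W.takeUntil w hw with hP
  have hPle : G.dist s w ≤ P.length := SimpleGraph.dist_le P
  have hPsplit : P.append (W.dropUntil w hw) = W := W.take_spec hw
  -- shortest walk s→w
  have hreach : G.Reachable s w := ⟨P⟩
  obtain ⟨Q, hQ⟩ := hreach.exists_walk_length_eq_dist
  have hge : P.length ≤ G.dist s w := by
    by_contra hlt
    push_neg at hlt
    have : W.length < W.length := by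
      calc W.length = G.dist s t := hWlen
        _ ≤ (Q.append (W.dropUntil w hw)).length := SimpleGraph.dist_le _
        _ = G.dist s w + (W.dropUntil w hw).length := by
            rw [SimpleGraph.Walk.length_append, hQ]
        _ < P.length + (W.dropUntil w hw).length := by omega
        _ = W.length := by rw [← SimpleGraph.Walk.length_append, hPsplit]
    omega
  have hd : G.dist s w = P.length := le_antisymm hPle hge
  -- decompose P.reverse = cons …
  obtain ⟨u, hadj, q, hq⟩ := SimpleGraph.Walk.exists_eq_cons_of_ne hws P.reverse
  have huW : u ∈ W.support := by
    apply SimpleGraph.Walk.support_takeUntil_subset W hw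
    have : u ∈ P.reverse.support := by rw [hq]; simp
    simpa [SimpleGraph.Walk.support_reverse] using this
  have huM : u ∉ M := by
    intro huM
    have := hone u huW huM
    exact G.irrefl (this ▸ hadj)
  have hadj' : G.Adj w' u := (hM w hwM w' hw'M u huM).mp hadj
  have hlen : q.length + 1 = P.length := by
    have := congrArg SimpleGraph.Walk.length hq
    simpa [SimpleGraph.Walk.length_reverse] using this.symm
  calc G.dist s w' ≤ (q.reverse.concat hadj'.symm).length := SimpleGraph.dist_le _
    _ = q.length + 1 := by simp [SimpleGraph.Walk.length_concat]
    _ = G.dist s w := by rw [hlen, hd]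

/-- Fix a partition of `V(G)` into modules `Mods 0, …, Mods (r-1)` and let
`M = Mods i₀` be one of them. If `W` and `W'` are shortest paths from `s` to `t`, each
containing at most one vertex from each module of the partition, and `w ∈ V(W) ∩ M`,
`w' ∈ V(W') ∩ M`, then `dist_G(s, w) = dist_G(s, w')`: the module `M` intersects `W` and
`W'` at the same position. -/
theorem stmt_9 {V : Type*} [Fintype V] (G : SimpleGraph V) (r : ℕ) (Mods : Fin r → Set V)
    (hpart : ∀ x : V, ∃! i, x ∈ Mods i) (hmod : ∀ i, IsModule G (Mods i))
    (i₀ : Fin r) (s t : V)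
    (W W' : G.Walk s t)
    (hWpath : W.IsPath) (hWlen : W.length = G.dist s t)
    (hW'path : W'.IsPath) (hW'len : W'.length = G.dist s t)
    (hWone : ∀ i, ∀ x ∈ W.support, ∀ y ∈ W.support, x ∈ Mods i → y ∈ Mods i → x = y)
    (hW'one : ∀ i, ∀ x ∈ W'.support, ∀ y ∈ W'.support, x ∈ Mods i → y ∈ Mods i → x = y)
    (w w' : V) (hw : w ∈ W.support) (hwM : w ∈ Mods i₀)
    (hw' : w' ∈ W'.support) (hw'M : w' ∈ Mods i₀) :
    G.dist s w = G.dist s w' := by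
  classical
  by_cases hsM : s ∈ Mods i₀
  · have hws : w = s := hWone i₀ w hw s W.start_mem_support hwM hsM
    have hw's : w' = s := hW'one i₀ w' hw' s W'.start_mem_support hw'M hsM
    rw [hws, hw's]
  · have h1 : G.dist s w' ≤ G.dist s w :=
      aux_step (hmod i₀) W hWlen hw hwM hw'M
        (fun x hx hxM => hWone i₀ x hx w hw hxM hwM) hsM
    have h2 : G.dist s w ≤ G.dist s w' :=
      aux_step (hmod i₀) W' hW'len hw' hw'M hwM
        (fun x hx hxM => hW'one i₀ x hx w' hw' hxM hw'M) hsM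
    omega
end

section
/- Let G be a finite simple graph, M a module of G, and W a shortest path from s to t whose vertex set intersects M in exactly one vertex u, where u ∉ {s, t}. Then for every vertex v ∈ M, the sequence obtained from W by replacing u with v is again a shortest path from s to t in G. -/
/-!
Replacing `u` by `v` sends every edge of `W` to an edge of `G`: a neighbour of `u` on `W` lies
outside `M`, so it is adjacent to `v` as well. The replacement is injective on `W`, because `v`
lies on `W` only if `v = u`. Hence the image of `W` is a path of the same length.
-/

open SimpleGraph

namespace SimpleGraph.Walk

variable {V V' : Type*} {G : SimpleGraph V} {H : SimpleGraph V'}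

theorem exists_support_eq_map (f : V → V') {s t : V} (W : G.Walk s t)
    (hf : ∀ d ∈ W.darts, H.Adj (f d.fst) (f d.snd)) :
    ∃ W' : H.Walk (f s) (f t), W'.length = W.length ∧ W'.support = W.support.map f := by
  induction W with
  | nil => exact ⟨nil, rfl, rfl⟩
  | cons hxy W ih =>
    obtain ⟨W', hlen, hsupp⟩ := ih fun d hd => hf d (List.mem_cons_of_mem _ hd)
    refine ⟨cons (hf _ List.mem_cons_self) W', ?_, ?_⟩ <;> simp [hlen, hsupp]

end SimpleGraph.Walk

theorem Set.injOn_ite_eq {V : Type*} [DecidableEq V] {S : Set V} {u v : V}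
    (hv : v ∈ S → v = u) : S.InjOn fun x => if x = u then v else x := by
  intro x hx y hy hxy
  by_cases hxu : x = u <;> by_cases hyu : y = u <;> simp only [hxu, hyu, if_true, if_false] at hxy
  · exact hxu.trans hyu.symm
  · exact absurd (hv (hxy ▸ hy)) (hxy ▸ hyu)
  · exact absurd (hv (hxy ▸ hx)) (hxy ▸ hxu)
  · exact hxy

theorem IsModule.adj_ite_eq {V : Type*} [DecidableEq V] {G : SimpleGraph V} {M : Set V}
    (hM : IsModule G M) {u v : V} (hu : u ∈ M) (hv : v ∈ M) {x y : V} (hxy : G.Adj x y)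
    (hx : x ∈ M → x = u) (hy : y ∈ M → y = u) :
    G.Adj (if x = u then v else x) (if y = u then v else y) := by
  by_cases hxu : x = u <;> by_cases hyu : y = u <;> simp only [hxu, hyu, if_true, if_false]
  · exact absurd (hxu.trans hyu.symm) hxy.ne
  · subst hxu
    exact (hM x hu v hv y fun hyM => hyu (hy hyM)).mp hxy
  · subst hyu
    exact ((hM y hu v hv x fun hxM => hxu (hx hxM)).mp hxy.symm).symm
  · exact hxy

theorem stmt_10_general {V : Type*} [DecidableEq V] (G : SimpleGraph V) (M : Set V)
    (hM : IsModule G M) (s t : V) (W : G.Walk s t) (hpath : W.IsPath)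
    (hlen : W.length = G.dist s t) (u : V) (huM : u ∈ M)
    (huniq : ∀ x ∈ W.support, x ∈ M → x = u) (hus : u ≠ s) (hut : u ≠ t) :
    ∀ v ∈ M, ∃ W' : G.Walk s t, W'.IsPath ∧ W'.length = G.dist s t ∧
      W'.support = W.support.map fun x => if x = u then v else x := by
  intro v hvM
  obtain ⟨W', hlen', hsupp'⟩ := W.exists_support_eq_map (fun x => if x = u then v else x)
    fun d hd => hM.adj_ite_eq huM hvM d.adj (huniq _ (W.dart_fst_mem_support_of_mem_darts hd))
      (huniq _ (W.dart_snd_mem_support_of_mem_darts hd))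
  have hs : (if s = u then v else s) = s := if_neg hus.symm
  have ht : (if t = u then v else t) = t := if_neg hut.symm
  refine ⟨W'.copy hs ht, ?_, by rw [Walk.length_copy, hlen', hlen],
    by rw [Walk.support_copy, hsupp']⟩
  rw [Walk.isPath_copy, Walk.isPath_def, hsupp']
  exact hpath.support_nodup.map_on (Set.injOn_ite_eq (huniq v · hvM))

/-- If a shortest path `W` from `s` to `t` meets a module `M` in exactly
one vertex `u ∉ {s, t}`, then for every `v ∈ M` the sequence obtained from `W` by replacing
`u` with `v` is again a shortest path from `s` to `t`. -/
theorem stmt_10 {V : Type*} [Fintype V] [DecidableEq V] (G : SimpleGraph V) (M : Set V)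
    (hM : IsModule G M) (s t : V) (W : G.Walk s t) (hpath : W.IsPath)
    (hlen : W.length = G.dist s t) (u : V) (huM : u ∈ M) (huW : u ∈ W.support)
    (huniq : ∀ x ∈ W.support, x ∈ M → x = u) (hus : u ≠ s) (hut : u ≠ t) :
    ∀ v ∈ M, ∃ W' : G.Walk s t, W'.IsPath ∧ W'.length = G.dist s t ∧
      W'.support = W.support.map fun x => if x = u then v else x :=
  stmt_10_general G M hM s t W hpath hlen u huM huniq hus hut
end

section
/- Let G be a finite simple graph, s, t vertices, and P, Q st-shortest paths in G. Let u and v be distinct non-adjacent vertices of G with N_G(u) = N_G(v) (false twins), such that u does not lie on P or on Q and u ∉ {s, t}. Then there exists a TJ-reconfiguration sequence from P to Q in G if and only if there exists a TJ-reconfiguration sequence from P to Q in the induced subgraph G − u. -/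
/-! Since `N(u) ⊆ N(v)` and `u ≠ v`, folding `u` onto `v` is a retraction `G → G − u`, so the
inclusion `G − u → G` preserves distances and the `st`-shortest paths of `G − u` are those of `G`
avoiding `u`. Conversely the fold maps an `st`-shortest path of `G` to one of `G − u`: it stays a
path because `u` and `v` never lie on a common shortest path with `u ∉ {s, t}` (a shortcut through
`v` would exist). The fold fixes `P` and `Q` and turns each TJ-move into a TJ-move or a repetition,
so reconfiguration sequences transfer in both directions. -/

open SimpleGraph

open Relation

section Reconfiguration

variable {V V' : Type*} {G : SimpleGraph V} {H : SimpleGraph V'} {s t : V}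

def TJStep (G : SimpleGraph V) {s t : V} (A B : G.Walk s t) : Prop :=
  IsShortestSTPath G A ∧ IsShortestSTPath G B ∧ TJAdjacent G A B

theorem exists_tjSeq_iff {P Q : G.Walk s t} :
    (∃ ℓ, TJSeq G P Q ℓ) ↔ IsShortestSTPath G P ∧ ReflTransGen (TJStep G) P Q := by
  constructor
  · rintro ⟨ℓ, f, rfl, rfl, hshort, hadj⟩
    refine ⟨hshort 0 ℓ.zero_le, ?_⟩
    suffices ∀ i ≤ ℓ, ReflTransGen (TJStep G) (f 0) (f i) from this ℓ le_rfl
    intro i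
    induction i with
    | zero => exact fun _ => .refl
    | succ i ih =>
      exact fun hi => (ih (by omega)).tail ⟨hshort i (by omega), hshort (i + 1) hi, hadj i hi⟩
  · rintro ⟨hP, hPQ⟩
    induction hPQ with
    | refl => exact ⟨0, fun _ => P, rfl, rfl, fun _ _ => hP, fun i h => absurd h i.not_lt_zero⟩
    | @tail B C _ hBC ih =>
      obtain ⟨ℓ, f, hf0, hfℓ, hshort, hadj⟩ := ih
      refine ⟨ℓ + 1, fun i => if i ≤ ℓ then f i else C, by simpa using hf0, by simp, ?_, ?_⟩
      · intro i hi
        dsimp only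
        split_ifs with h
        exacts [hshort i h, hBC.2.1]
      · intro i hi
        rcases Nat.lt_or_eq_of_le (Nat.le_of_lt_succ hi) with hi | rfl
        · simpa [hi.le, Nat.succ_le_of_lt hi] using hadj i hi
        · simpa [hfℓ] using hBC.2.2

lemma exists_tjSeq_copy {s' t' : V} (hs : s = s') (ht : t = t') {P Q : G.Walk s t}
    (h : ∃ ℓ, TJSeq G P Q ℓ) : ∃ ℓ, TJSeq G (P.copy hs ht) (Q.copy hs ht) ℓ := by
  subst hs ht
  simpa using h

lemma TJAdjacent.map (f : G →g H) {A B : G.Walk s t} (h : TJAdjacent G A B) :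
    A.map f = B.map f ∨ TJAdjacent H (A.map f) (B.map f) := by
  obtain ⟨hlen, p, -, hp⟩ := h
  by_cases hfp : f (A.getVert p) = f (B.getVert p)
  · refine .inl (Walk.ext_getVert_le_length (by simpa) fun k _ => ?_)
    by_cases hk : k = p
    · simpa [hk] using hfp
    · simp [of_not_not (mt (hp k) hk)]
  · exact .inr ⟨by simpa, p, by simpa, fun k hk => hp k fun h => hk (by simp [h])⟩

lemma Relation.ReflTransGen.tjStep_map (f : G →g H)
    (hf : ∀ A : G.Walk s t, IsShortestSTPath G A → IsShortestSTPath H (A.map f))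
    {P Q : G.Walk s t} (h : ReflTransGen (TJStep G) P Q) :
    ReflTransGen (TJStep H) (P.map f) (Q.map f) :=
  h.lift' _ fun A B ⟨hA, hB, hAB⟩ =>
    (hAB.map f).elim (fun heq => show ReflTransGen _ (A.map f) _ from heq ▸ .refl)
      fun h => .single ⟨hf A hA, hf B hB, h⟩

end Reconfiguration

namespace SimpleGraph

variable {V V' : Type*} {G : SimpleGraph V} {H : SimpleGraph V'} {s t u v : V}

lemma edist_map_le (f : G →g H) (a b : V) : H.edist (f a) (f b) ≤ G.edist a b := by
  by_cases hr : G.Reachable a b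
  · obtain ⟨p, hp⟩ := hr.exists_walk_length_eq_edist
    simpa [hp] using edist_le (p.map f)
  · simp [edist_eq_top_of_not_reachable hr]

lemma dist_map_of_leftInverse (ι : H →g G) (r : G →g H) (hr : Function.LeftInverse r ι)
    (a b : V') : G.dist (ι a) (ι b) = H.dist a b := by
  have h : G.edist (ι a) (ι b) = H.edist a b := by
    refine le_antisymm (edist_map_le ι a b) ?_
    simpa only [hr a, hr b] using edist_map_le r (ι a) (ι b)
  simp only [dist, h]

lemma dist_lt_length_add_of_neighborSet_subset (hN : G.neighborSet u ⊆ G.neighborSet v)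
    (hvu : v ≠ u) (hut : u ≠ t) (p : G.Walk s v) (q : G.Walk v u) (r : G.Walk u t) :
    G.dist s t < p.length + q.length + r.length := by
  cases r with
  | nil => exact absurd rfl hut
  | cons h r =>
    have hq : q.length ≠ 0 := Walk.length_eq_zero_iff.not.mpr (Walk.not_nil_of_ne hvu)
    have hv : G.Adj v _ := hN h
    have := G.dist_le (p.append (.cons hv r))
    rw [Walk.length_append, Walk.length_cons] at this
    rw [Walk.length_cons]
    omega

lemma dist_lt_length_add_of_neighborSet_subset' (hN : G.neighborSet u ⊆ G.neighborSet v)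
    (hvu : v ≠ u) (hus : u ≠ s) (p : G.Walk s u) (q : G.Walk u v) (r : G.Walk v t) :
    G.dist s t < p.length + q.length + r.length := by
  have := dist_lt_length_add_of_neighborSet_subset hN hvu hus r.reverse q.reverse p.reverse
  rw [dist_comm, Walk.length_reverse, Walk.length_reverse, Walk.length_reverse] at this
  omega

lemma Walk.notMem_support_of_neighborSet_subset {W : G.Walk s t} (hW : W.length = G.dist s t)
    (hN : G.neighborSet u ⊆ G.neighborSet v) (huv : u ≠ v) (hus : u ≠ s) (hut : u ≠ t)
    (hu : u ∈ W.support) : v ∉ W.support := by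
  intro hv
  obtain ⟨A, B, rfl⟩ := Walk.mem_support_iff_exists_append.mp hu
  rcases (Walk.mem_support_append_iff A B).mp hv with hvA | hvB
  · obtain ⟨A₁, A₂, rfl⟩ := Walk.mem_support_iff_exists_append.mp hvA
    have := dist_lt_length_add_of_neighborSet_subset hN huv.symm hut A₁ A₂ B
    simp only [Walk.length_append] at hW
    omega
  · obtain ⟨B₁, B₂, rfl⟩ := Walk.mem_support_iff_exists_append.mp hvB
    have := dist_lt_length_add_of_neighborSet_subset' hN huv.symm hus A B₁ B₂
    simp only [Walk.length_append] at hW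
    omega

open Classical in
noncomputable def fold (huv : u ≠ v) (hN : G.neighborSet u ⊆ G.neighborSet v) :
    G →g G.induce ({u}ᶜ : Set V) where
  toFun x := if hx : x = u then ⟨v, huv.symm⟩ else ⟨x, hx⟩
  map_rel' {a b} hab := by
    by_cases ha : a = u <;> by_cases hb : b = u
    · exact absurd (ha.trans hb.symm ▸ hab) (G.loopless.irrefl b)
    · simpa [ha, hb] using hN (ha ▸ hab)
    · simpa [ha, hb] using (hN (hb ▸ hab.symm)).symm
    · simpa [ha, hb] using hab

open Classical in
lemma coe_fold (huv : u ≠ v) (hN : G.neighborSet u ⊆ G.neighborSet v) (x : V) :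
    (fold huv hN x : V) = if x = u then v else x := by
  by_cases hx : x = u <;> simp [fold, hx]

lemma coe_fold_of_ne (huv : u ≠ v) (hN : G.neighborSet u ⊆ G.neighborSet v) {x : V}
    (hx : x ≠ u) : (fold huv hN x : V) = x := by
  simp [coe_fold, hx]

lemma fold_induce (huv : u ≠ v) (hN : G.neighborSet u ⊆ G.neighborSet v)
    (a : ({u}ᶜ : Set V)) : fold huv hN (Embedding.induce (G := G) _ a) = a :=
  Subtype.ext (coe_fold_of_ne huv hN a.2)

lemma dist_induce_compl_singleton (huv : u ≠ v) (hN : G.neighborSet u ⊆ G.neighborSet v)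
    (a b : ({u}ᶜ : Set V)) :
    (G.induce {u}ᶜ).dist a b = G.dist a b :=
  (dist_map_of_leftInverse (Embedding.induce _).toHom (fold huv hN) (fold_induce huv hN) a b).symm

lemma support_map_fold (huv : u ≠ v) (hN : G.neighborSet u ⊆ G.neighborSet v)
    {W : G.Walk s t} (huW : u ∉ W.support) :
    (W.map (fold huv hN)).support.map Subtype.val = W.support := by
  rw [Walk.support_map, List.map_map]
  exact List.map_congr_left (fun x hx => coe_fold_of_ne huv hN (ne_of_mem_of_not_mem hx huW))
    |>.trans W.support.map_id

end SimpleGraph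

theorem IsShortestSTPath.map_fold {V : Type*} {G : SimpleGraph V} {s t u v : V} (huv : u ≠ v)
    (hN : G.neighborSet u ⊆ G.neighborSet v) (hus : u ≠ s) (hut : u ≠ t) {W : G.Walk s t}
    (hW : IsShortestSTPath G W) : IsShortestSTPath (G.induce {u}ᶜ) (W.map (fold huv hN)) := by
  refine ⟨?_, ?_⟩
  · rw [Walk.isPath_def, Walk.support_map]
    refine hW.1.support_nodup.map_on fun x hx y hy hxy => ?_
    have hxy := congrArg Subtype.val hxy
    simp only [coe_fold] at hxy
    have hnot := W.notMem_support_of_neighborSet_subset hW.2 hN huv hus hut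
    split_ifs at hxy with hxu hyu hyu
    · exact hxu.trans hyu.symm
    · exact absurd (hxy ▸ hy) (hnot (hxu ▸ hx))
    · exact absurd (hxy ▸ hx) (hnot (hyu ▸ hy))
    · exact hxy
  · rw [Walk.length_map, hW.2, dist_induce_compl_singleton huv hN, coe_fold_of_ne huv hN hus.symm,
      coe_fold_of_ne huv hN hut.symm]

theorem IsShortestSTPath.map_induce {V : Type*} {G : SimpleGraph V} {u v : V} (huv : u ≠ v)
    (hN : G.neighborSet u ⊆ G.neighborSet v) {a b : ({u}ᶜ : Set V)}
    {A : (G.induce {u}ᶜ).Walk a b} (hA : IsShortestSTPath (G.induce {u}ᶜ) A) :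
    IsShortestSTPath G (A.map (Embedding.induce _).toHom) :=
  ⟨hA.1.map Subtype.val_injective,
    (Walk.length_map _ _).trans (hA.2.trans (dist_induce_compl_singleton huv hN a b))⟩

theorem stmt_11_general {V : Type*} (G : SimpleGraph V) (s t : V)
    (P Q : G.Walk s t)
    (u v : V) (huv : u ≠ v)
    (htwin : ∀ w : V, G.Adj u w ↔ G.Adj v w)
    (huP : u ∉ P.support) (huQ : u ∉ Q.support) (hus : u ≠ s) (hut : u ≠ t) :
    (∃ ℓ : ℕ, TJSeq G P Q ℓ) ↔
      ∃ (hs : s ∈ ({u}ᶜ : Set V)) (ht : t ∈ ({u}ᶜ : Set V))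
        (P' Q' : (G.induce ({u}ᶜ : Set V)).Walk ⟨s, hs⟩ ⟨t, ht⟩),
        P'.support.map Subtype.val = P.support ∧
        Q'.support.map Subtype.val = Q.support ∧
        ∃ ℓ : ℕ, TJSeq (G.induce ({u}ᶜ : Set V)) P' Q' ℓ := by
  have hN : G.neighborSet u ⊆ G.neighborSet v := fun w => (htwin w).mp
  constructor
  · intro h
    obtain ⟨hP, hPQ⟩ := exists_tjSeq_iff.mp h
    have hfs : fold huv hN s = ⟨s, hus.symm⟩ := Subtype.ext (coe_fold_of_ne huv hN hus.symm)
    have hft : fold huv hN t = ⟨t, hut.symm⟩ := Subtype.ext (coe_fold_of_ne huv hN hut.symm)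
    -- `fold s = ⟨s, _⟩` holds only propositionally, hence the copies.
    refine ⟨hus.symm, hut.symm, (P.map (fold huv hN)).copy hfs hft,
      (Q.map (fold huv hN)).copy hfs hft, by simpa using support_map_fold huv hN huP,
      by simpa using support_map_fold huv hN huQ, ?_⟩
    refine exists_tjSeq_copy hfs hft (exists_tjSeq_iff.mpr ⟨hP.map_fold huv hN hus hut, ?_⟩)
    exact hPQ.tjStep_map _ fun A hA => hA.map_fold huv hN hus hut
  · rintro ⟨_, _, P', Q', hP', hQ', h⟩
    obtain ⟨hP'short, hPQ'⟩ := exists_tjSeq_iff.mp h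
    have hP : P'.map (Embedding.induce _).toHom = P :=
      Walk.ext_support ((Walk.support_map _ _).trans hP')
    have hQ : Q'.map (Embedding.induce _).toHom = Q :=
      Walk.ext_support ((Walk.support_map _ _).trans hQ')
    refine hP ▸ hQ ▸ exists_tjSeq_iff.mpr ⟨hP'short.map_induce huv hN, ?_⟩
    exact hPQ'.tjStep_map _ fun A hA => hA.map_induce huv hN

/-- Let `u, v` be false twins (distinct, non-adjacent, with the same open
neighborhoods), where `u` lies neither on `P` nor on `Q` and `u ∉ {s, t}`. Then there is a
TJ-reconfiguration sequence from `P` to `Q` in `G` iff there is one in the induced subgraph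
`G − u` (between the copies of `P` and `Q` in `G − u`). -/
theorem stmt_11 {V : Type*} [Fintype V] (G : SimpleGraph V) (s t : V)
    (P Q : G.Walk s t) (hP : IsShortestSTPath G P) (hQ : IsShortestSTPath G Q)
    (u v : V) (huv : u ≠ v) (hnadj : ¬G.Adj u v)
    (htwin : ∀ w : V, G.Adj u w ↔ G.Adj v w)
    (huP : u ∉ P.support) (huQ : u ∉ Q.support) (hus : u ≠ s) (hut : u ≠ t) :
    (∃ ℓ : ℕ, TJSeq G P Q ℓ) ↔
      ∃ (hs : s ∈ ({u}ᶜ : Set V)) (ht : t ∈ ({u}ᶜ : Set V))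
        (P' Q' : (G.induce ({u}ᶜ : Set V)).Walk ⟨s, hs⟩ ⟨t, ht⟩),
        P'.support.map Subtype.val = P.support ∧
        Q'.support.map Subtype.val = Q.support ∧
        ∃ ℓ : ℕ, TJSeq (G.induce ({u}ᶜ : Set V)) P' Q' ℓ :=
  stmt_11_general G s t P Q u v huv htwin huP huQ hus hut
end

section
/- Let G be a finite simple graph, s, t vertices, and P, Q st-shortest paths in G. Let u and v be distinct adjacent vertices of G with N_G[u] = N_G[v] (true twins), such that u does not lie on P or on Q and u ∉ {s, t}. Then there exists a TJ-reconfiguration sequence from P to Q in G if and only if there exists a TJ-reconfiguration sequence from P to Q in the induced subgraph G − u. -/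
/-!
Identify `u` with its twin `v`. A shortest `st`-path through the inner vertex `u` cannot also
visit `v`: the neighbours of `u` on it are adjacent or equal to `v`, which would give a shortcut.
So the identification maps every shortest `st`-path of `G` to an `st`-walk of `G - u` of the same
length, which is again shortest because the `st`-distances in `G` and `G - u` agree. TJ-adjacent
paths are mapped to equal or TJ-adjacent ones and `P`, `Q` are fixed, so reconfiguration
sequences descend from `G` to `G - u`; those of the induced subgraph `G - u` lift to `G` verbatim.
-/

open SimpleGraph

open Relation

namespace SimpleGraph

variable {V : Type*} {G : SimpleGraph V}

namespace Walk

variable {s t : V} {W : G.Walk s t}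

theorem le_succ_of_adj_getVert (hW : W.length = G.dist s t) {i j : ℕ} (hj : j ≤ W.length)
    (h : G.Adj (W.getVert i) (W.getVert j)) : j ≤ i + 1 := by
  have hshort := G.dist_le ((W.take i).append (cons h (W.drop j)))
  simp only [length_append, length_cons, take_length, drop_length] at hshort
  omega

theorem le_succ_of_adj_or_eq_getVert (hW : W.length = G.dist s t) {i j : ℕ}
    (hi : i ≤ W.length) (hj : j ≤ W.length)
    (h : G.Adj (W.getVert i) (W.getVert j) ∨ W.getVert i = W.getVert j) : j ≤ i + 1 := by
  rcases h with h | h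
  · exact le_succ_of_adj_getVert hW hj h
  · have := (W.isPath_of_length_eq_dist hW).getVert_injOn hj hi h.symm
    omega

/-- The neighbours of `u` just before and after it on the walk lie in `N[v]`; on a shortest walk
this pins the position of `v` to that of `u`. -/
theorem notMem_support_of_dominated {u v : V} (huv : u ≠ v)
    (hN : ∀ w, G.Adj u w → G.Adj v w ∨ w = v) (hW : W.length = G.dist s t)
    (hus : u ≠ s) (hut : u ≠ t) (hu : u ∈ W.support) : v ∉ W.support := by
  intro hv
  obtain ⟨i, rfl, hi⟩ := mem_support_iff_exists_getVert.1 hu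
  obtain ⟨j, rfl, hj⟩ := mem_support_iff_exists_getVert.1 hv
  have hi0 : i ≠ 0 := by rintro rfl; exact hus W.getVert_zero
  have hil : i ≠ W.length := by rintro rfl; exact hut W.getVert_length
  have hprev : G.Adj (W.getVert (i - 1)) (W.getVert i) := by
    simpa [Nat.sub_add_cancel (Nat.pos_of_ne_zero hi0)] using
      W.adj_getVert_succ (i := i - 1) (by omega)
  have hnext : G.Adj (W.getVert i) (W.getVert (i + 1)) := W.adj_getVert_succ (by omega)
  have hji : j ≤ i - 1 + 1 := le_succ_of_adj_or_eq_getVert hW (by omega) hj <|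
    (hN _ hprev.symm).imp Adj.symm id
  have hij : i + 1 ≤ j + 1 := le_succ_of_adj_or_eq_getVert hW hj (by omega) <|
    (hN _ hnext).imp id Eq.symm
  exact huv (congrArg W.getVert (by omega))

theorem edge_notMem_edges_of_dominated {u v : V} (huv : u ≠ v)
    (hN : ∀ w, G.Adj u w → G.Adj v w ∨ w = v) (hW : W.length = G.dist s t)
    (hus : u ≠ s) (hut : u ≠ t) : s(u, v) ∉ W.edges := fun he =>
  notMem_support_of_dominated huv hN hW hus hut (W.fst_mem_support_of_mem_edges he)
    (W.snd_mem_support_of_mem_edges he)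

end Walk

section Collapse

variable [DecidableEq V] {u v : V} (huv : u ≠ v) (hN : ∀ w, G.Adj u w → G.Adj v w ∨ w = v)

/-- Identifying `u` with a vertex `v` that dominates it is a graph homomorphism once the edge
`uv`, the only one it would turn into a loop, is deleted. -/
def collapseHom : G.deleteEdges {s(u, v)} →g G.induce ({u}ᶜ : Set V) where
  toFun x := ⟨if x = u then v else x, Set.mem_compl_singleton_iff.2 <| by
    split_ifs with h
    exacts [huv.symm, h]⟩
  map_rel' {x y} h := by
    obtain ⟨hxy, hne⟩ := deleteEdges_adj.1 h
    simp only [comap_adj, Function.Embedding.coe_subtype]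
    split_ifs with hx hy hy
    · exact absurd (hx.trans hy.symm) hxy.ne
    · subst hx
      exact (hN y hxy).resolve_right (by rintro rfl; exact hne rfl)
    · subst hy
      exact ((hN x hxy.symm).resolve_right (by rintro rfl; exact hne Sym2.eq_swap)).symm
    · exact hxy

theorem coe_collapseHom_of_ne {x : V} (hx : x ≠ u) : (collapseHom huv hN x : V) = x := if_neg hx

variable {a b : V}

def Walk.collapse (W : G.Walk a b) (hW : s(u, v) ∉ W.edges) (ha : a ≠ u) (hb : b ≠ u) :
    (G.induce ({u}ᶜ : Set V)).Walk ⟨a, ha⟩ ⟨b, hb⟩ :=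
  ((W.toDeleteEdge _ hW).map (collapseHom huv hN)).copy
    (Subtype.ext (coe_collapseHom_of_ne huv hN ha)) (Subtype.ext (coe_collapseHom_of_ne huv hN hb))

variable {huv hN}

@[simp]
theorem Walk.length_collapse (W : G.Walk a b) (hW ha hb) :
    (W.collapse huv hN hW ha hb).length = W.length := by
  simp [Walk.collapse]

@[simp]
theorem Walk.getVert_collapse (W : G.Walk a b) (hW ha hb) (i : ℕ) :
    (W.collapse huv hN hW ha hb).getVert i = collapseHom huv hN (W.getVert i) := by
  rw [Walk.collapse, Walk.getVert_copy, Walk.getVert_map]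
  congr 1
  conv_rhs => rw [← W.map_toDeleteEdges_eq {s(u, v)} fun e he h => hW (h ▸ he)]
  rw [Walk.getVert_map]
  rfl

theorem Walk.support_collapse_of_notMem (W : G.Walk a b) (hW ha hb) (hu : u ∉ W.support) :
    (W.collapse huv hN hW ha hb).support.map Subtype.val = W.support := by
  simp only [Walk.collapse, Walk.support_copy, Walk.support_map, Walk.support_transfer,
    List.map_map]
  exact (List.map_congr_left (g := id) fun x hx =>
    coe_collapseHom_of_ne huv hN (ne_of_mem_of_not_mem hx hu)).trans W.support.map_id

end Collapse

theorem dist_induce_eq_of_walk {S : Set V} {a b : S} (W : (G.induce S).Walk a b)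
    (hW : W.length = G.dist a b) : (G.induce S).dist a b = G.dist a b := by
  refine le_antisymm (hW ▸ dist_le W) ?_
  obtain ⟨W', hW'⟩ := W.reachable.exists_walk_length_eq_dist
  exact hW' ▸ W'.length_map (Embedding.induce S).toHom ▸ G.dist_le _

end SimpleGraph

section Reconfiguration

variable {V : Type*}

abbrev ShortestSTPath (H : SimpleGraph V) (s t : V) : Type _ :=
  {W : H.Walk s t // IsShortestSTPath H W}

def TJRel (H : SimpleGraph V) (s t : V) (A B : ShortestSTPath H s t) : Prop :=
  TJAdjacent H A.1 B.1

variable {H : SimpleGraph V} {s t : V}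

theorem isShortestSTPath_of_length_eq_dist {W : H.Walk s t} (h : W.length = H.dist s t) :
    IsShortestSTPath H W :=
  ⟨W.isPath_of_length_eq_dist h, h⟩

theorem exists_tjSeq_iff_reflTransGen {P Q : H.Walk s t} :
    (∃ ℓ, TJSeq H P Q ℓ) ↔ ∃ hP hQ, ReflTransGen (TJRel H s t) ⟨P, hP⟩ ⟨Q, hQ⟩ := by
  constructor
  · rintro ⟨ℓ, f, rfl, rfl, hf, hadj⟩
    refine ⟨hf 0 ℓ.zero_le, hf ℓ le_rfl, ?_⟩
    suffices ∀ n (hn : n ≤ ℓ), ReflTransGen (TJRel H s t) ⟨f 0, _⟩ ⟨f n, hf n hn⟩ from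
      this ℓ le_rfl
    intro n hn
    induction n with
    | zero => exact .refl
    | succ n ih => exact (ih (by omega)).tail (hadj n hn)
  · rintro ⟨hP, hQ, h⟩
    suffices ∀ {A B}, ReflTransGen (TJRel H s t) A B → ∃ ℓ, TJSeq H A.1 B.1 ℓ from this h
    intro A B h
    induction h with
    | refl => exact ⟨0, fun _ => A.1, rfl, rfl, fun _ _ => A.2, fun _ h => absurd h (by omega)⟩
    | @tail B C _ hBC ih =>
      obtain ⟨ℓ, f, hf0, hfℓ, hf, hadj⟩ := ih
      refine ⟨ℓ + 1, fun i => if i ≤ ℓ then f i else C.1, by simp [hf0], by simp, ?_, ?_⟩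
      · intro i hi
        by_cases hiℓ : i ≤ ℓ
        · simpa [hiℓ] using hf i hiℓ
        · simpa [hiℓ] using C.2
      · intro i hi
        by_cases hiℓ : i < ℓ
        · simpa [hiℓ.le, Nat.succ_le_of_lt hiℓ] using hadj i hiℓ
        · obtain rfl : i = ℓ := by omega
          simpa [hfℓ, TJRel] using hBC

theorem TJRel.reflTransGen_of_getVert {V' : Type*} {H' : SimpleGraph V'} {s' t' : V'}
    (f : V → V') {A B : ShortestSTPath H s t} {A' B' : ShortestSTPath H' s' t'}
    (hlA : A'.1.length = A.1.length) (hlB : B'.1.length = B.1.length)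
    (hA : ∀ i, A'.1.getVert i = f (A.1.getVert i)) (hB : ∀ i, B'.1.getVert i = f (B.1.getVert i))
    (h : TJRel H s t A B) : ReflTransGen (TJRel H' s' t') A' B' := by
  obtain ⟨hlen, k, -, huniq⟩ := h
  by_cases hall : ∀ i, A'.1.getVert i = B'.1.getVert i
  · rw [Subtype.ext (Walk.ext_getVert hall)]
  obtain ⟨j, hj⟩ := not_forall.1 hall
  have hk : ∀ i, A'.1.getVert i ≠ B'.1.getVert i → i = k := fun i hi =>
    huniq i fun e => hi (by rw [hA, hB, e])
  exact .single ⟨hlA.trans (hlen.trans hlB.symm), j, hj, fun i hi => (hk i hi).trans (hk j hj).symm⟩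

end Reconfiguration

namespace ShortestSTPath

variable {V : Type*} {G : SimpleGraph V} {s t : V}

section Collapse

variable {u v : V}

theorem dist_induce_compl_eq (huv : u ≠ v) (hN : ∀ w, G.Adj u w → G.Adj v w ∨ w = v)
    (hs : s ≠ u) (ht : t ≠ u) (W : ShortestSTPath G s t) :
    (G.induce ({u}ᶜ : Set V)).dist ⟨s, hs⟩ ⟨t, ht⟩ = G.dist s t := by
  classical
  exact dist_induce_eq_of_walk (W.1.collapse huv hN
    (W.1.edge_notMem_edges_of_dominated huv hN W.2.2 hs.symm ht.symm) hs ht) (by simp [W.2.2])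

variable [DecidableEq V]

def collapse (huv : u ≠ v) (hN : ∀ w, G.Adj u w → G.Adj v w ∨ w = v) (hs : s ≠ u) (ht : t ≠ u)
    (W : ShortestSTPath G s t) : ShortestSTPath (G.induce ({u}ᶜ : Set V)) ⟨s, hs⟩ ⟨t, ht⟩ :=
  ⟨W.1.collapse huv hN (W.1.edge_notMem_edges_of_dominated huv hN W.2.2 hs.symm ht.symm) hs ht,
    isShortestSTPath_of_length_eq_dist <| by
      simp [W.2.2, dist_induce_compl_eq huv hN hs ht W]⟩

theorem reflTransGen_collapse {huv : u ≠ v} {hN : ∀ w, G.Adj u w → G.Adj v w ∨ w = v}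
    {hs : s ≠ u} {ht : t ≠ u} {A B : ShortestSTPath G s t} (h : TJRel G s t A B) :
    ReflTransGen (TJRel _ _ _) (A.collapse huv hN hs ht) (B.collapse huv hN hs ht) :=
  TJRel.reflTransGen_of_getVert (collapseHom huv hN) (by simp [collapse]) (by simp [collapse])
    (by simp [collapse]) (by simp [collapse]) h

end Collapse

variable {S : Set V} {hs : s ∈ S} {ht : t ∈ S}

def ofInduce (hdist : (G.induce S).dist ⟨s, hs⟩ ⟨t, ht⟩ = G.dist s t)
    (W : ShortestSTPath (G.induce S) ⟨s, hs⟩ ⟨t, ht⟩) : ShortestSTPath G s t :=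
  ⟨W.1.map (Embedding.induce S).toHom,
    isShortestSTPath_of_length_eq_dist ((W.1.length_map _).trans (W.2.2.trans hdist))⟩

theorem ofInduce_eq_of_support {hdist : (G.induce S).dist ⟨s, hs⟩ ⟨t, ht⟩ = G.dist s t}
    {W : ShortestSTPath (G.induce S) ⟨s, hs⟩ ⟨t, ht⟩} {W' : ShortestSTPath G s t}
    (h : W.1.support.map Subtype.val = W'.1.support) : ofInduce hdist W = W' :=
  Subtype.ext <| Walk.ext_support <| (W.1.support_map _).trans h

theorem reflTransGen_ofInduce {hdist : (G.induce S).dist ⟨s, hs⟩ ⟨t, ht⟩ = G.dist s t}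
    {A B : ShortestSTPath (G.induce S) ⟨s, hs⟩ ⟨t, ht⟩} (h : TJRel _ _ _ A B) :
    ReflTransGen (TJRel G s t) (ofInduce hdist A) (ofInduce hdist B) :=
  TJRel.reflTransGen_of_getVert Subtype.val (A.1.length_map _) (B.1.length_map _)
    (A.1.getVert_map _) (B.1.getVert_map _) h

end ShortestSTPath

theorem stmt_12_general {V : Type*} (G : SimpleGraph V) (s t : V)
    (P Q : G.Walk s t) (hP : IsShortestSTPath G P) (hQ : IsShortestSTPath G Q)
    (u v : V) (huv : u ≠ v)
    (htwin : ∀ w : V, (G.Adj u w ∨ w = u) ↔ (G.Adj v w ∨ w = v))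
    (huP : u ∉ P.support) (huQ : u ∉ Q.support) (hus : u ≠ s) (hut : u ≠ t) :
    (∃ ℓ : ℕ, TJSeq G P Q ℓ) ↔
      ∃ (hs : s ∈ ({u}ᶜ : Set V)) (ht : t ∈ ({u}ᶜ : Set V))
        (P' Q' : (G.induce ({u}ᶜ : Set V)).Walk ⟨s, hs⟩ ⟨t, ht⟩),
        P'.support.map Subtype.val = P.support ∧
        Q'.support.map Subtype.val = Q.support ∧
        ∃ ℓ : ℕ, TJSeq (G.induce ({u}ᶜ : Set V)) P' Q' ℓ := by
  classical
  have hN : ∀ w, G.Adj u w → G.Adj v w ∨ w = v := fun w h => (htwin w).1 (.inl h)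
  let down := ShortestSTPath.collapse huv hN hus.symm hut.symm
  simp only [exists_tjSeq_iff_reflTransGen]
  constructor
  · rintro ⟨_, _, h⟩
    exact ⟨hus.symm, hut.symm, _, _, P.support_collapse_of_notMem _ _ _ huP,
      Q.support_collapse_of_notMem _ _ _ huQ, (down ⟨P, hP⟩).2, (down ⟨Q, hQ⟩).2,
      h.lift' down fun _ _ => ShortestSTPath.reflTransGen_collapse⟩
  · rintro ⟨_, _, P', Q', hPP', hQQ', hP', hQ', h⟩
    have hdist := ShortestSTPath.dist_induce_compl_eq huv hN hus.symm hut.symm ⟨P, hP⟩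
    let up := ShortestSTPath.ofInduce hdist
    have hP'P : up ⟨P', hP'⟩ = ⟨P, hP⟩ := ShortestSTPath.ofInduce_eq_of_support hPP'
    have hQ'Q : up ⟨Q', hQ'⟩ = ⟨Q, hQ⟩ := ShortestSTPath.ofInduce_eq_of_support hQQ'
    refine ⟨hP, hQ, ?_⟩
    rw [← hP'P, ← hQ'Q]
    exact h.lift' up fun _ _ => ShortestSTPath.reflTransGen_ofInduce

/-- Let `u, v` be true twins (distinct, adjacent, with the same closed
neighborhoods), where `u` lies neither on `P` nor on `Q` and `u ∉ {s, t}`. Then there is a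
TJ-reconfiguration sequence from `P` to `Q` in `G` iff there is one in the induced subgraph
`G − u` (between the copies of `P` and `Q` in `G − u`). -/
theorem stmt_12 {V : Type*} [Fintype V] (G : SimpleGraph V) (s t : V)
    (P Q : G.Walk s t) (hP : IsShortestSTPath G P) (hQ : IsShortestSTPath G Q)
    (u v : V) (huv : u ≠ v) (hadj : G.Adj u v)
    (htwin : ∀ w : V, (G.Adj u w ∨ w = u) ↔ (G.Adj v w ∨ w = v))
    (huP : u ∉ P.support) (huQ : u ∉ Q.support) (hus : u ≠ s) (hut : u ≠ t) :
    (∃ ℓ : ℕ, TJSeq G P Q ℓ) ↔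
      ∃ (hs : s ∈ ({u}ᶜ : Set V)) (ht : t ∈ ({u}ᶜ : Set V))
        (P' Q' : (G.induce ({u}ᶜ : Set V)).Walk ⟨s, hs⟩ ⟨t, ht⟩),
        P'.support.map Subtype.val = P.support ∧
        Q'.support.map Subtype.val = Q.support ∧
        ∃ ℓ : ℕ, TJSeq (G.induce ({u}ᶜ : Set V)) P' Q' ℓ :=
  stmt_12_general G s t P Q hP hQ u v huv htwin huP huQ hus hut
end

section
/- Let G be a finite simple graph, s, t vertices with dist_G(s,t) = k, and fix an index i with 1 ≤ i ≤ k − 1. Suppose that the subgraph of G induced on the set of vertices whose distance from s lies in {i−1, i, i+1} contains no cycle. Then any two st-shortest paths P and Q that are connected by a TJ-reconfiguration sequence have the same vertex at position i. -/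
open SimpleGraph

open SimpleGraph

lemma walk_to_getVert {V : Type*} {G : SimpleGraph V} {s t : V} (W : G.Walk s t) :
    ∀ p : ℕ, ∃ w : G.Walk s (W.getVert p), w.length ≤ p := by
  intro p
  induction p with
  | zero => exact ⟨(Walk.nil : G.Walk s s).copy rfl (W.getVert_zero).symm, by simp⟩
  | succ n ih =>
    obtain ⟨w, hw⟩ := ih
    by_cases h : n < W.length
    · exact ⟨w.concat (W.adj_getVert_succ h), by rw [Walk.length_concat]; omega⟩
    · have he : W.getVert (n + 1) = W.getVert n := by
        rw [W.getVert_of_length_le (by omega), W.getVert_of_length_le (by omega)]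
      exact ⟨w.copy rfl he.symm, by rw [Walk.length_copy]; omega⟩

lemma walk_from_getVert {V : Type*} {G : SimpleGraph V} {s t : V} (W : G.Walk s t) :
    ∀ q : ℕ, ∃ w : G.Walk (W.getVert (W.length - q)) t, w.length ≤ q := by
  intro q
  induction q with
  | zero => exact ⟨(Walk.nil : G.Walk t t).copy (by simp) rfl, by simp⟩
  | succ n ih =>
    obtain ⟨w, hw⟩ := ih
    by_cases h : n < W.length
    · have hlt : W.length - (n + 1) < W.length := by omega
      have hadj := W.adj_getVert_succ hlt
      have he : W.length - (n + 1) + 1 = W.length - n := by omega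
      rw [he] at hadj
      exact ⟨Walk.cons hadj w, by rw [Walk.length_cons]; omega⟩
    · have he : W.length - n = W.length - (n + 1) := by omega
      exact ⟨w.copy (by rw [he]) rfl, by rw [Walk.length_copy]; omega⟩

lemma dist_getVert {V : Type*} {G : SimpleGraph V} {s t : V} {W : G.Walk s t}
    (hW : W.length = G.dist s t) {p : ℕ} (hp : p ≤ W.length) :
    G.dist s (W.getVert p) = p := by
  obtain ⟨w1, hw1⟩ := walk_to_getVert W p
  obtain ⟨w2, hw2⟩ := walk_from_getVert W (W.length - p)
  have he : W.length - (W.length - p) = p := by omega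
  let w2' : G.Walk (W.getVert p) t := w2.copy (by rw [he]) rfl
  have hw2' : w2'.length ≤ W.length - p := by rw [Walk.length_copy]; exact hw2
  have hle : G.dist s (W.getVert p) ≤ p := le_trans (G.dist_le w1) hw1
  by_contra h
  have hlt : G.dist s (W.getVert p) < p := lt_of_le_of_ne hle h
  obtain ⟨w0, hw0⟩ := (w1.reachable).exists_walk_length_eq_dist
  have := G.dist_le (w0.append w2')
  rw [Walk.length_append] at this
  omega

lemma key_step {V : Type*} (G : SimpleGraph V) (s t : V) (k : ℕ)
    (hk : G.dist s t = k) (i : ℕ) (hi1 : 1 ≤ i) (hi2 : i ≤ k - 1)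
    (hforest : (G.induce {x : V | G.dist s x = i - 1 ∨ G.dist s x = i ∨
      G.dist s x = i + 1}).IsAcyclic)
    (P Q : G.Walk s t) (hP : IsShortestSTPath G P) (hQ : IsShortestSTPath G Q)
    (hadj : TJAdjacent G P Q) : P.getVert i = Q.getVert i := by
  by_contra hne
  obtain ⟨-, j, hj, huniq⟩ := hadj
  have hji : i = j := huniq i hne
  subst hji
  have hk1 : 1 ≤ k := by omega
  have hPl : P.length = k := hP.2.trans hk
  have hQl : Q.length = k := hQ.2.trans hk
  have h1 : P.getVert (i - 1) = Q.getVert (i - 1) := by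
    by_contra h; have := huniq _ h; omega
  have h3 : P.getVert (i + 1) = Q.getVert (i + 1) := by
    by_contra h; have := huniq _ h; omega
  set a := P.getVert (i - 1) with ha_def
  set u := P.getVert i with hu_def
  set v := Q.getVert i with hv_def
  set b := P.getVert (i + 1) with hb_def
  have hda : G.dist s a = i - 1 := dist_getVert hP.2 (by omega)
  have hdu : G.dist s u = i := dist_getVert hP.2 (by omega)
  have hdv : G.dist s v = i := dist_getVert hQ.2 (by omega)
  have hdb : G.dist s b = i + 1 := dist_getVert hP.2 (by omega)
  set S : Set V := {x : V | G.dist s x = i - 1 ∨ G.dist s x = i ∨ G.dist s x = i + 1}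
    with hS_def
  have haS : a ∈ S := Or.inl hda
  have huS : u ∈ S := Or.inr (Or.inl hdu)
  have hvS : v ∈ S := Or.inr (Or.inl hdv)
  have hbS : b ∈ S := Or.inr (Or.inr hdb)
  have hau : G.Adj a u := by
    have := P.adj_getVert_succ (show i - 1 < P.length by omega)
    rwa [show i - 1 + 1 = i by omega] at this
  have hub : G.Adj u b := P.adj_getVert_succ (show i < P.length by omega)
  have hav : G.Adj a v := by
    have := Q.adj_getVert_succ (show i - 1 < Q.length by omega)
    rwa [show i - 1 + 1 = i by omega, ← h1] at this
  have hvb : G.Adj v b := by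
    have := Q.adj_getVert_succ (show i < Q.length by omega)
    rwa [← h3] at this
  -- distinctness
  have hne_au : a ≠ u := fun h => by rw [h] at hda; omega
  have hne_ab : a ≠ b := fun h => by rw [h] at hda; omega
  have hne_ub : u ≠ b := fun h => by rw [h] at hdu; omega
  have hne_av : a ≠ v := fun h => by rw [h] at hda; omega
  have hne_vb : v ≠ b := fun h => by rw [h] at hdv; omega
  set GI := G.induce S with hGI
  have hau' : GI.Adj ⟨a, haS⟩ ⟨u, huS⟩ := hau
  have hub' : GI.Adj ⟨u, huS⟩ ⟨b, hbS⟩ := hub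
  have hav' : GI.Adj ⟨a, haS⟩ ⟨v, hvS⟩ := hav
  have hvb' : GI.Adj ⟨v, hvS⟩ ⟨b, hbS⟩ := hvb
  let p1 : GI.Walk ⟨a, haS⟩ ⟨b, hbS⟩ := Walk.cons hau' (Walk.cons hub' Walk.nil)
  let p2 : GI.Walk ⟨a, haS⟩ ⟨b, hbS⟩ := Walk.cons hav' (Walk.cons hvb' Walk.nil)
  have hp1 : p1.IsPath := by
    simp [p1, Walk.isPath_def, Subtype.ext_iff, hne_au, hne_ab, hne_ub]
  have hp2 : p2.IsPath := by
    simp [p2, Walk.isPath_def, Subtype.ext_iff, hne_av, hne_ab, hne_vb]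
  have heq : (⟨p1, hp1⟩ : GI.Path _ _) = ⟨p2, hp2⟩ :=
    isAcyclic_iff_path_unique.mp hforest _ _
  have hsupp := congrArg (fun q : GI.Path ⟨a, haS⟩ ⟨b, hbS⟩ => (q.val).support) heq
  simp [p1, p2, Subtype.ext_iff] at hsupp
  exact hne hsupp

/-- Suppose `dist_G(s,t) = k`, fix `1 ≤ i ≤ k − 1`, and suppose the
subgraph of `G` induced on the vertices whose distance from `s` lies in `{i−1, i, i+1}`
contains no cycle. Then any two `st`-shortest paths connected by a TJ-reconfiguration
sequence have the same vertex at position `i`. -/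
theorem stmt_13 {V : Type*} [Fintype V] (G : SimpleGraph V) (s t : V) (k : ℕ)
    (hk : G.dist s t = k) (i : ℕ) (hi1 : 1 ≤ i) (hi2 : i ≤ k - 1)
    (hforest : (G.induce {x : V | G.dist s x = i - 1 ∨ G.dist s x = i ∨
      G.dist s x = i + 1}).IsAcyclic)
    (P Q : G.Walk s t) (hP : IsShortestSTPath G P) (hQ : IsShortestSTPath G Q)
    (hseq : ∃ ℓ : ℕ, TJSeq G P Q ℓ) :
    P.getVert i = Q.getVert i := by
  obtain ⟨ℓ, f, hf0, hfl, hsp, hstep⟩ := hseq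
  suffices h : ∀ m, m ≤ ℓ → (f 0).getVert i = (f m).getVert i by
    rw [← hf0, ← hfl]; exact h ℓ le_rfl
  intro m
  induction m with
  | zero => intro _; rfl
  | succ n ih =>
    intro hm
    rw [ih (by omega)]
    exact key_step G s t k hk i hi1 hi2 hforest (f n) (f (n + 1))
      (hsp n (by omega)) (hsp (n + 1) hm) (hstep n (by omega))
end

section
/- Let G be a finite simple graph, let F be a feedback vertex set of G, and let s, t be vertices with dist_G(s,t) = k ≥ 4·|F| + 3. Then there exists an index p with 1 ≤ p ≤ k − 1 such that any two st-shortest paths P and Q that are connected by a TJ-reconfiguration sequence have the same vertex at position p. -/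
/-!
Choose a position `p` such that no vertex of `F` lies at distance `p - 1`, `p` or `p + 1`
from `s`; since each vertex of `F` rules out at most three positions, `k ≥ 3|F| + 2` leaves one.
A single TJ-step that changed the vertex at position `p` would give two common neighbours
`x ≠ y` of the vertices at positions `p - 1` and `p + 1`, a 4-cycle inside the forest `G - F`.
So no step of a reconfiguration sequence moves position `p`.
-/

open SimpleGraph Finset

lemma Finset.exists_mem_Icc_forall_notMem_Icc {α : Type*} (F : Finset α) (d : α → ℕ) {m : ℕ}
    (hm : 3 * #F < m) : ∃ p ∈ Icc 1 m, ∀ f ∈ F, p ∉ Icc (d f - 1) (d f + 1) := by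
  set B := F.biUnion fun f => Icc (d f - 1) (d f + 1)
  have hB : #B ≤ 3 * #F := by
    rw [mul_comm]
    exact card_biUnion_le_card_mul _ _ _ fun f _ => by rw [Nat.card_Icc]; omega
  obtain ⟨p, hp⟩ : (Icc 1 m \ B).Nonempty := by
    have := le_card_sdiff B (Icc 1 m)
    rw [Nat.card_Icc] at this
    exact card_pos.mp (by omega)
  rw [mem_sdiff, mem_biUnion] at hp
  exact ⟨p, hp.1, fun f hf hpf => hp.2 ⟨f, hf, hpf⟩⟩

namespace SimpleGraph

variable {V : Type*} {G : SimpleGraph V}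

lemma Walk.dist_getVert_of_length_eq_dist {s t : V} (W : G.Walk s t)
    (hW : W.length = G.dist s t) {i : ℕ} (hi : i ≤ W.length) :
    G.dist s (W.getVert i) = i := by
  have hpre := dist_le (W.take i)
  have hsuf := dist_le (W.drop i)
  have htri := (W.drop i).reachable.dist_triangle_right s
  rw [Walk.take_length] at hpre
  rw [Walk.drop_length] at hsuf
  omega

lemma IsAcyclic.eq_of_adj_of_adj (hG : G.IsAcyclic) {a b x y : V} (hab : a ≠ b)
    (hax : G.Adj a x) (hxb : G.Adj x b) (hay : G.Adj a y) (hyb : G.Adj y b) : x = y := by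
  have hpath {z : V} (haz : G.Adj a z) (hzb : G.Adj z b) :
      (Walk.cons haz (Walk.cons hzb Walk.nil)).IsPath := by
    simp [Walk.cons_isPath_iff, haz.ne, hzb.ne, hab]
  simpa using congrArg (fun P : G.Path a b => P.1.getVert 1)
    ((hG.subsingleton_path a b).elim ⟨_, hpath hax hxb⟩ ⟨_, hpath hay hyb⟩)

lemma TJAdjacent.getVert_eq {s t : V} {P Q : G.Walk s t} (hPQ : TJAdjacent G P Q)
    (hP : P.length = G.dist s t) {F : Set V} (hF : (G.induce Fᶜ).IsAcyclic) {p : ℕ}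
    (hp : 1 ≤ p) (hpk : p < G.dist s t)
    (hfar : ∀ v ∈ F, p ∉ Icc (G.dist s v - 1) (G.dist s v + 1)) :
    P.getVert p = Q.getVert p := by
  by_contra hne
  obtain ⟨hlen, j, -, huniq⟩ := hPQ
  have hsame (q : ℕ) (hq : q ≠ p) : P.getVert q = Q.getVert q :=
    not_not.mp fun h => hq ((huniq q h).trans (huniq p hne).symm)
  have hdist_pred : G.dist s (P.getVert (p - 1)) = p - 1 :=
    P.dist_getVert_of_length_eq_dist hP (by omega)
  have hdist_x : G.dist s (P.getVert p) = p := P.dist_getVert_of_length_eq_dist hP (by omega)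
  have hdist_y : G.dist s (Q.getVert p) = p :=
    Q.dist_getVert_of_length_eq_dist (hlen ▸ hP) (by omega)
  have hdist_succ : G.dist s (P.getVert (p + 1)) = p + 1 :=
    P.dist_getVert_of_length_eq_dist hP (by omega)
  have hmem {v : V} (hv : p ≤ G.dist s v + 1) (hv' : G.dist s v ≤ p + 1) : v ∈ Fᶜ :=
    fun hvF => hfar v hvF (mem_Icc.mpr ⟨by omega, hv⟩)
  have hpred : p - 1 + 1 = p := Nat.sub_add_cancel hp
  have haP := P.adj_getVert_succ (i := p - 1) (by omega)
  have hbP := P.adj_getVert_succ (i := p) (by omega)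
  have haQ := Q.adj_getVert_succ (i := p - 1) (by omega)
  have hbQ := Q.adj_getVert_succ (i := p) (by omega)
  rw [hpred] at haP haQ
  rw [← hsame (p - 1) (by omega)] at haQ
  rw [← hsame (p + 1) (by omega)] at hbQ
  have hab : P.getVert (p - 1) ≠ P.getVert (p + 1) := fun h => by
    rw [h] at hdist_pred
    omega
  refine hne (congrArg Subtype.val (hF.eq_of_adj_of_adj
    (a := ⟨P.getVert (p - 1), hmem ?_ ?_⟩) (b := ⟨P.getVert (p + 1), hmem ?_ ?_⟩)
    (x := ⟨P.getVert p, hmem ?_ ?_⟩) (y := ⟨Q.getVert p, hmem ?_ ?_⟩)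
    (by simpa using hab) haP hbP haQ hbQ))
  all_goals omega

lemma TJSeq.getVert_eq {s t : V} {P Q : G.Walk s t} {ℓ p : ℕ} (hPQ : TJSeq G P Q ℓ)
    (hstep : ∀ P' Q' : G.Walk s t, IsShortestSTPath G P' → TJAdjacent G P' Q' →
      P'.getVert p = Q'.getVert p) :
    P.getVert p = Q.getVert p := by
  obtain ⟨f, rfl, rfl, hshort, hadj⟩ := hPQ
  suffices ∀ i ≤ ℓ, (f 0).getVert p = (f i).getVert p from this ℓ le_rfl
  intro i hi
  induction i with
  | zero => rfl
  | succ i ih => exact (ih (by omega)).trans (hstep _ _ (hshort i (by omega)) (hadj i hi))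

end SimpleGraph

theorem stmt_14_general {V : Type*} (G : SimpleGraph V) (F : Finset V)
    (hF : (G.induce ((↑F : Set V)ᶜ)).IsAcyclic)
    (s t : V) (k : ℕ) (hk : G.dist s t = k) (hbig : 4 * F.card + 3 ≤ k) :
    ∃ p : ℕ, 1 ≤ p ∧ p ≤ k - 1 ∧
      ∀ P Q : G.Walk s t, IsShortestSTPath G P → IsShortestSTPath G Q →
        (∃ ℓ : ℕ, TJSeq G P Q ℓ) → P.getVert p = Q.getVert p := by
  obtain ⟨p, hp, hfar⟩ :=
    Finset.exists_mem_Icc_forall_notMem_Icc F (G.dist s) (m := k - 1) (by omega)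
  rw [mem_Icc] at hp
  refine ⟨p, hp.1, hp.2, fun P Q _ _ ⟨ℓ, hseq⟩ => hseq.getVert_eq fun P' Q' hP' hPQ' => ?_⟩
  exact hPQ'.getVert_eq hP'.2 hF hp.1 (by omega) hfar

/-- Let `F` be a feedback vertex set of `G` and `s, t` vertices with
`dist_G(s,t) = k ≥ 4|F| + 3`. Then there is a position `p` with `1 ≤ p ≤ k − 1` such that
any two `st`-shortest paths connected by a TJ-reconfiguration sequence have the same vertex
at position `p`. -/
theorem stmt_14 {V : Type*} [Fintype V] [DecidableEq V] (G : SimpleGraph V) (F : Finset V)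
    (hF : (G.induce ((↑F : Set V)ᶜ)).IsAcyclic)
    (s t : V) (k : ℕ) (hk : G.dist s t = k) (hbig : 4 * F.card + 3 ≤ k) :
    ∃ p : ℕ, 1 ≤ p ∧ p ≤ k - 1 ∧
      ∀ P Q : G.Walk s t, IsShortestSTPath G P → IsShortestSTPath G Q →
        (∃ ℓ : ℕ, TJSeq G P Q ℓ) → P.getVert p = Q.getVert p :=
  stmt_14_general G F hF s t k hk hbig
end

section
/- Let G be a finite simple graph, S a set of vertices, and 𝓕 a family of pairwise disjoint S-flaps of G. Let W be a path in G with k ≥ 1 edges whose first and last vertices do not belong to any flap in 𝓕. Then the number of flaps X ∈ 𝓕 with V(W) ∩ X ≠ ∅ is at most ⌈(k − 1)/2⌉. -/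
open SimpleGraph

open scoped Classical

/-- An `S`-flap of `G`: a vertex set `X` disjoint from `S` with no edges of `G` between
`X` and `V(G) ∖ (S ∪ X)`. -/
def IsFlap {V : Type*} (G : SimpleGraph V) (S X : Set V) : Prop :=
  X ∩ S = ∅ ∧ ∀ x ∈ X, ∀ y : V, y ∉ S → y ∉ X → ¬G.Adj x y

/-!
Let `m X` be the index of the first vertex of `W` in the flap `X`. Since `u ∉ X`, the
vertex just before it exists, lies outside `X` and is adjacent to a vertex of `X`, so it lies
in `S`. Hence two distinct disjoint flaps cannot have first indices equal or consecutive
(the earlier hit would lie in `S`). The first indices of the flaps met by `W` are thus pairwise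
at least `2` apart and lie in `[1, k - 1]`, which leaves room for at most `⌊k / 2⌋` of them.
-/

theorem Finset.card_le_div_two_of_separated {α : Type*} (T : Finset α) (m : α → ℕ) (k : ℕ)
    (hm : ∀ x ∈ T, 1 ≤ m x ∧ m x < k)
    (hsep : ∀ x ∈ T, ∀ y ∈ T, x ≠ y → m x + 2 ≤ m y ∨ m y + 2 ≤ m x) :
    T.card ≤ k / 2 := by
  have hinj : Set.InjOn (fun x => (m x - 1) / 2) T := by
    intro x hx y hy hxy
    by_contra hne
    have := hsep x hx y hy hne
    have := (hm x hx).1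
    have := (hm y hy).1
    simp only at hxy
    omega
  simpa using Finset.card_le_card_of_injOn _ (fun x hx => by
    have := hm x hx
    simp only [Finset.mem_coe, Finset.mem_range]
    omega) hinj (t := Finset.range (k / 2))

namespace SimpleGraph.Walk

variable {V : Type*} {G : SimpleGraph V} {u v : V} (W : G.Walk u v) (X : Set V)

-- Equals `0` (junk) when `W` misses `X`; every lemma below assumes `W` meets `X`.
noncomputable def firstHit : ℕ := sInf {i | W.getVert i ∈ X}

variable {W X}

theorem getVert_firstHit_mem (hX : ∃ z ∈ W.support, z ∈ X) : W.getVert (W.firstHit X) ∈ X := by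
  obtain ⟨z, hz, hzX⟩ := hX
  obtain ⟨n, rfl, -⟩ := mem_support_iff_exists_getVert.mp hz
  exact Nat.sInf_mem (s := {i | W.getVert i ∈ X}) ⟨n, hzX⟩

theorem getVert_notMem_of_lt_firstHit {j : ℕ} (hj : j < W.firstHit X) : W.getVert j ∉ X :=
  Nat.notMem_of_lt_sInf hj

theorem firstHit_pos (hX : ∃ z ∈ W.support, z ∈ X) (hu : u ∉ X) : 0 < W.firstHit X := by
  refine Nat.pos_of_ne_zero fun h => hu ?_
  simpa [h] using getVert_firstHit_mem hX

theorem firstHit_le_length (hX : ∃ z ∈ W.support, z ∈ X) : W.firstHit X ≤ W.length := by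
  obtain ⟨z, hz, hzX⟩ := hX
  obtain ⟨n, rfl, hn⟩ := mem_support_iff_exists_getVert.mp hz
  exact (Nat.sInf_le hzX).trans hn

theorem firstHit_lt_length (hX : ∃ z ∈ W.support, z ∈ X) (hv : v ∉ X) :
    W.firstHit X < W.length :=
  (firstHit_le_length hX).lt_of_ne fun h => hv (by simpa [h] using getVert_firstHit_mem hX)

theorem getVert_pred_firstHit_mem {S : Set V} (hflap : IsFlap G S X)
    (hX : ∃ z ∈ W.support, z ∈ X) (hu : u ∉ X) : W.getVert (W.firstHit X - 1) ∈ S := by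
  have hpos := firstHit_pos hX hu
  have hadj : G.Adj (W.getVert (W.firstHit X - 1)) (W.getVert (W.firstHit X)) := by
    simpa [Nat.sub_add_cancel hpos] using
      W.adj_getVert_succ (i := W.firstHit X - 1) (by have := firstHit_le_length hX; omega)
  by_contra hS
  exact hflap.2 _ (getVert_firstHit_mem hX) _ hS
    (getVert_notMem_of_lt_firstHit (by omega)) hadj.symm

theorem firstHit_ne_firstHit_add_one {S Y : Set V} (hX : IsFlap G S X) (hY : IsFlap G S Y)
    (hXmet : ∃ z ∈ W.support, z ∈ X) (hYmet : ∃ z ∈ W.support, z ∈ Y) (huY : u ∉ Y) :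
    W.firstHit Y ≠ W.firstHit X + 1 := by
  intro h
  have hS := getVert_pred_firstHit_mem hY hYmet huY
  rw [h, Nat.add_sub_cancel] at hS
  exact (Set.eq_empty_iff_forall_notMem.mp hX.1) _ ⟨getVert_firstHit_mem hXmet, hS⟩

theorem firstHit_add_two_le_or {S Y : Set V} (hX : IsFlap G S X) (hY : IsFlap G S Y)
    (hXY : Disjoint X Y) (hXmet : ∃ z ∈ W.support, z ∈ X) (hYmet : ∃ z ∈ W.support, z ∈ Y)
    (huX : u ∉ X) (huY : u ∉ Y) :
    W.firstHit X + 2 ≤ W.firstHit Y ∨ W.firstHit Y + 2 ≤ W.firstHit X := by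
  have hne : W.firstHit X ≠ W.firstHit Y := fun h =>
    hXY.ne_of_mem (getVert_firstHit_mem hXmet) (h ▸ getVert_firstHit_mem hYmet) rfl
  have := firstHit_ne_firstHit_add_one hX hY hXmet hYmet huY
  have := firstHit_ne_firstHit_add_one hY hX hYmet hXmet huX
  omega

end SimpleGraph.Walk

theorem stmt_16_general {V : Type*} (G : SimpleGraph V) (S : Set V)
    (𝓕 : Finset (Set V)) (hflap : ∀ X ∈ 𝓕, IsFlap G S X)
    (hdisj : ∀ X ∈ 𝓕, ∀ Y ∈ 𝓕, X ≠ Y → Disjoint X Y)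
    (u v : V) (W : G.Walk u v) (k : ℕ) (hlen : W.length = k)
    (hu : ∀ X ∈ 𝓕, u ∉ X) (hv : ∀ X ∈ 𝓕, v ∉ X) :
    (𝓕.filter fun X => ∃ z ∈ W.support, z ∈ X).card ≤ (k - 1 + 1) / 2 := by
  rw [show (k - 1 + 1) / 2 = k / 2 by omega]
  subst hlen
  refine Finset.card_le_div_two_of_separated _ W.firstHit _ (fun X hX => ?_)
    fun X hX Y hY hXY => ?_
  · rw [Finset.mem_filter] at hX
    exact ⟨Walk.firstHit_pos hX.2 (hu X hX.1), Walk.firstHit_lt_length hX.2 (hv X hX.1)⟩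
  · rw [Finset.mem_filter] at hX hY
    exact Walk.firstHit_add_two_le_or (hflap X hX.1) (hflap Y hY.1) (hdisj X hX.1 Y hY.1 hXY)
      hX.2 hY.2 (hu X hX.1) (hu Y hY.1)

/-- Let `𝓕` be a family of pairwise disjoint `S`-flaps of `G` and let
`W` be a path with `k ≥ 1` edges whose endpoints lie in no flap of `𝓕`. Then `W` meets at
most `⌈(k − 1)/2⌉` of the flaps of `𝓕`. -/
theorem stmt_16 {V : Type*} [Fintype V] (G : SimpleGraph V) (S : Set V)
    (𝓕 : Finset (Set V)) (hflap : ∀ X ∈ 𝓕, IsFlap G S X)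
    (hdisj : ∀ X ∈ 𝓕, ∀ Y ∈ 𝓕, X ≠ Y → Disjoint X Y)
    (u v : V) (W : G.Walk u v) (hpath : W.IsPath) (k : ℕ) (hlen : W.length = k)
    (hk : 1 ≤ k) (hu : ∀ X ∈ 𝓕, u ∉ X) (hv : ∀ X ∈ 𝓕, v ∉ X) :
    (𝓕.filter fun X => ∃ z ∈ W.support, z ∈ X).card ≤ (k - 1 + 1) / 2 :=
  stmt_16_general G S 𝓕 hflap hdisj u v W k hlen hu hv
end
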